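/- arXiv:2008.11091 — 8 statements merged into one kernel-verified Lean document; each statement's English description precedes it below -/
import Mathlib

section
/- Let Z be a compact metric space and let (z_n) be a sequence in Z such that d(z_n, z_{n+1}) → 0 as n → ∞. Then the set of cluster points of (z_n) is nonempty, closed, and connected. -/
/-! Separate two disjoint closed pieces of the cluster set by an Urysohn function `g`, equal to `0`
on one piece and `1` on the other. By compactness `g` is uniformly continuous, so the steps of
`g ∘ z` tend to `0`. As `g ∘ z` is frequently near `0` and frequently near `1`, and eventually
cannot jump over the band `[1/3, 2/3]`, it lands in that band infinitely often; compactness then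
gives a cluster point in neither piece. -/

open Filter Set Topology Uniformity

theorem frequently_mem_Icc_of_small_steps {α : Type*} [AddCommGroup α] [LinearOrder α]
    [IsOrderedAddMonoid α] {f : ℕ → α} {a b : α} (hab : a ≤ b)
    (hstep : ∀ᶠ n in atTop, f (n + 1) ≤ f n + (b - a))
    (hlow : ∃ᶠ n in atTop, f n < a) (hhigh : ∃ᶠ n in atTop, b ≤ f n) :
    ∃ᶠ n in atTop, f n ∈ Icc a b := by
  by_contra hnot
  rw [not_frequently] at hnot
  obtain ⟨N, hN⟩ := eventually_atTop.mp (hstep.and hnot)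
  obtain ⟨n₀, hn₀N, hn₀⟩ := frequently_atTop.mp hlow N
  have hbelow : ∀ m ≥ n₀, f m < a := by
    intro m hm
    induction m, hm using Nat.le_induction with
    | base => exact hn₀
    | succ m hm ih =>
      have hlt : f (m + 1) < b := calc
        f (m + 1) ≤ f m + (b - a) := (hN m (hn₀N.trans hm)).1
        _ < a + (b - a) := add_lt_add_left ih _
        _ = b := add_sub_cancel a b
      by_contra hge
      exact (hN (m + 1) (by omega)).2 ⟨not_lt.mp hge, hlt.le⟩
  obtain ⟨m, hm, hbm⟩ := frequently_atTop.mp hhigh n₀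
  exact (hab.trans hbm).not_gt (hbelow m hm)

section ClusterSet

variable {Z : Type*} [UniformSpace Z] [CompactSpace Z] {z : ℕ → Z}

theorem exists_mapClusterPt_mem_Icc_of_tendsto_uniformity
    (hstep : Tendsto (fun n => (z n, z (n + 1))) atTop (𝓤 Z))
    {g : Z → ℝ} (hg : Continuous g) {p q : Z}
    (hp : MapClusterPt p atTop z) (hq : MapClusterPt q atTop z)
    {a b : ℝ} (hab : a < b) (hpa : g p < a) (hqb : b < g q) :
    ∃ r, MapClusterPt r atTop z ∧ g r ∈ Icc a b := by
  have hgstep : Tendsto (fun n => dist (g (z n)) (g (z (n + 1)))) atTop (𝓝 0) :=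
    tendsto_uniformity_iff_dist_tendsto_zero.mp
      (Tendsto.comp (CompactSpace.uniformContinuous_of_continuous hg) hstep)
  have hband : ∃ᶠ n in atTop, g (z n) ∈ Icc a b := by
    refine frequently_mem_Icc_of_small_steps hab.le ?_
      (hp.frequently (p := (g · < a)) ?_) (hq.frequently (p := (b ≤ g ·)) ?_)
    · filter_upwards [hgstep.eventually_lt_const (sub_pos.2 hab)] with n hn
      rw [Real.dist_eq, abs_sub_comm] at hn
      linarith [le_abs_self (g (z (n + 1)) - g (z n))]
    · exact hg.continuousAt.eventually_lt continuousAt_const hpa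
    · exact (continuousAt_const.eventually_lt hg.continuousAt hqb).mono fun _ h => h.le
  obtain ⟨r, hr, hrz⟩ :=
    (isClosed_Icc.preimage hg).isCompact.exists_mapClusterPt_of_frequently hband
  exact ⟨r, hrz, hr⟩

theorem isPreconnected_setOf_mapClusterPt
    (hstep : Tendsto (fun n => (z n, z (n + 1))) atTop (𝓤 Z)) :
    IsPreconnected {p | MapClusterPt p atTop z} := by
  set L := {p | MapClusterPt p atTop z}
  have hL : IsClosed L := isClosed_setOfPred_clusterPt
  rw [isPreconnected_closed_iff]
  rintro t t' ht ht' hcover ⟨p, hpL, hpt⟩ ⟨q, hqL, hqt'⟩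
  by_contra hempty
  have hdisj : Disjoint (L ∩ t) (L ∩ t') :=
    disjoint_left.2 fun x hx hx' => hempty ⟨x, hx.1, hx.2, hx'.2⟩
  obtain ⟨g, hg0, hg1, -⟩ :=
    exists_continuous_zero_one_of_isClosed (hL.inter ht) (hL.inter ht') hdisj
  obtain ⟨r, hrL, hr⟩ := exists_mapClusterPt_mem_Icc_of_tendsto_uniformity hstep g.continuous
    hpL hqL (a := 1 / 3) (b := 2 / 3) (by norm_num)
    (by rw [hg0 ⟨hpL, hpt⟩]; norm_num) (by rw [hg1 ⟨hqL, hqt'⟩]; norm_num)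
  rcases hcover hrL with hrt | hrt'
  · rw [mem_Icc, hg0 ⟨hrL, hrt⟩] at hr
    norm_num at hr
  · rw [mem_Icc, hg1 ⟨hrL, hrt'⟩] at hr
    norm_num at hr

end ClusterSet

/-- Let `Z` be a compact metric space and `(z n)` a sequence in `Z` with
`dist (z n) (z (n+1)) → 0`. Then the set of cluster points of `(z n)` (points that are limits
of some subsequence) is nonempty, closed and connected. -/
theorem cluster_set_nonempty_closed_connected
    {Z : Type*} [MetricSpace Z] [CompactSpace Z] (z : ℕ → Z)
    (hstep : Filter.Tendsto (fun n => dist (z n) (z (n + 1))) Filter.atTop (nhds 0)) :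
    ({p : Z | MapClusterPt p Filter.atTop z}).Nonempty ∧
      IsClosed {p : Z | MapClusterPt p Filter.atTop z} ∧
      IsConnected {p : Z | MapClusterPt p Filter.atTop z} := by
  have hne : {p : Z | MapClusterPt p atTop z}.Nonempty := exists_clusterPt_of_compactSpace _
  exact ⟨hne, isClosed_setOfPred_clusterPt, hne,
    isPreconnected_setOf_mapClusterPt (tendsto_uniformity_iff_dist_tendsto_zero.mpr hstep)⟩
end

section
/- Let f : ℝ^m → ℝ be C¹, let α, β ∈ (0,1), δ₀ > 0, and let K ⊆ ℝ^m be a compact set with inf_{x ∈ K} ‖∇f(x)‖ > 0. Then inf_{x ∈ K} δ(x) > 0, where δ(x) is the backtracking learning rate; equivalently, there exists j₀ ∈ ℕ such that for every x ∈ K some step size δ ∈ {β^j δ₀ : 0 ≤ j ≤ j₀} satisfies Armijo's condition at x. -/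
open Gradient

/-- Armijo's condition at `x` for step size `δ`:
`f(x − δ∇f(x)) − f(x) ≤ −αδ‖∇f(x)‖²`. -/
def ArmijoCondition {E : Type*} [NormedAddCommGroup E] [InnerProductSpace ℝ E]
    [CompleteSpace E] (f : E → ℝ) (α δ : ℝ) (x : E) : Prop :=
  f (x - δ • ∇ f x) - f x ≤ -(α * δ * ‖∇ f x‖ ^ 2)

/-!
Along the descent direction, `t ↦ f (x - t • ∇f(x))` has derivative `-‖∇f(x)‖²` at `0`, which
is strictly below `-α‖∇f(x)‖²` when `α < 1` and `∇f(x) ≠ 0`; hence the *strict* Armijo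
inequality holds at `x` for all small steps, in particular for some `β^j δ₀`. For a fixed step
the strict inequality is an open condition in `x`, since `f` and `∇f` are continuous, so these
open sets cover `K` and compactness leaves finitely many of them.
-/

open Filter Topology Set InnerProductSpace

theorem IsCompact.exists_bound_of_subset_iUnion_nat {X : Type*} [TopologicalSpace X]
    {K : Set X} (hK : IsCompact K) {U : ℕ → Set X} (hU : ∀ n, IsOpen (U n))
    (hKU : K ⊆ ⋃ n, U n) : ∃ N, ∀ x ∈ K, ∃ n ≤ N, x ∈ U n := by
  obtain ⟨t, ht⟩ := hK.elim_finite_subcover U hU hKU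
  refine ⟨t.sup id, fun x hx => ?_⟩
  obtain ⟨n, hn, hxn⟩ := mem_iUnion₂.mp (ht hx)
  exact ⟨n, t.le_sup (f := id) hn, hxn⟩

theorem tendsto_pow_mul_nhdsGT_zero {β δ₀ : ℝ} (hβ0 : 0 < β) (hβ1 : β < 1) (hδ₀ : 0 < δ₀) :
    Tendsto (fun j : ℕ => β ^ j * δ₀) atTop (𝓝[>] 0) :=
  tendsto_nhdsWithin_of_tendsto_nhds_of_eventually_within _
    (by simpa using (tendsto_pow_atTop_nhds_zero_of_lt_one hβ0.le hβ1).mul_const δ₀)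
    (Eventually.of_forall fun j => mul_pos (pow_pos hβ0 j) hδ₀)

section

variable {E : Type*} [NormedAddCommGroup E] [InnerProductSpace ℝ E] [CompleteSpace E]
  {f : E → ℝ}

def StrictArmijoCondition (f : E → ℝ) (α δ : ℝ) (x : E) : Prop :=
  f (x - δ • ∇ f x) - f x < -(α * δ * ‖∇ f x‖ ^ 2)

theorem ContDiff.continuous_gradient (hf : ContDiff ℝ 1 f) : Continuous (∇ f) :=
  (toDual ℝ E).symm.continuous.comp (hf.continuous_fderiv one_ne_zero)

theorem isOpen_setOf_strictArmijoCondition (hf : Continuous f) (hg : Continuous (∇ f))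
    (α δ : ℝ) : IsOpen {x | StrictArmijoCondition f α δ x} :=
  isOpen_lt (by fun_prop) (by fun_prop)

theorem HasGradientAt.hasDerivAt_comp_sub_smul {g x : E} (h : HasGradientAt f g x) :
    HasDerivAt (fun t : ℝ => f (x - t • g)) (-‖g‖ ^ 2) 0 := by
  have hline : HasDerivAt (fun t : ℝ => x - t • g) (-g) 0 := by
    simpa using ((hasDerivAt_id (0 : ℝ)).smul_const g).const_sub x
  have hfderiv : HasFDerivAt f (toDual ℝ E g) (x - (0 : ℝ) • g) := by
    simpa using h.hasFDerivAt
  have hcomp := hfderiv.comp_hasDerivAt 0 hline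
  rwa [toDual_apply_apply, inner_neg_right, real_inner_self_eq_norm_sq] at hcomp

theorem DifferentiableAt.eventually_strictArmijoCondition {x : E} {α : ℝ}
    (hf : DifferentiableAt ℝ f x) (hg : ∇ f x ≠ 0) (hα : α < 1) :
    ∀ᶠ δ in 𝓝[>] 0, StrictArmijoCondition f α δ x := by
  have hlt : -‖∇ f x‖ ^ 2 < -(α * ‖∇ f x‖ ^ 2) := by
    have := pow_pos (norm_pos_iff.2 hg) 2
    nlinarith
  have hderiv := hf.hasGradientAt.hasDerivAt_comp_sub_smul.hasDerivWithinAt (s := Ioi 0)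
  filter_upwards [hderiv.limsup_slope_le' self_notMem_Ioi hlt, self_mem_nhdsWithin]
    with δ hslope (hδ : 0 < δ)
  rw [slope_def_field, div_lt_iff₀ (by simpa using hδ)] at hslope
  simp only [zero_smul, sub_zero] at hslope
  unfold StrictArmijoCondition
  linarith

end

theorem backtracking_rate_uniform_lower_bound_on_compact_general
    {m : ℕ} (f : EuclideanSpace ℝ (Fin m) → ℝ) (hf : ContDiff ℝ 1 f)
    (α β δ₀ : ℝ) (hα1 : α < 1) (hβ0 : 0 < β) (hβ1 : β < 1) (hδ₀ : 0 < δ₀)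
    (K : Set (EuclideanSpace ℝ (Fin m))) (hK : IsCompact K)
    (hinf : ∃ c > 0, ∀ x ∈ K, c ≤ ‖∇ f x‖) :
    ∃ j₀ : ℕ, ∀ x ∈ K, ∃ j ≤ j₀, ArmijoCondition f α (β ^ j * δ₀) x := by
  obtain ⟨c, hc, hcK⟩ := hinf
  have hcover : K ⊆ ⋃ j : ℕ, {x | StrictArmijoCondition f α (β ^ j * δ₀) x} := by
    intro x hx
    have hgrad : ∇ f x ≠ 0 := norm_pos_iff.1 (hc.trans_le (hcK x hx))
    have hsmall := (hf.differentiable one_ne_zero x).eventually_strictArmijoCondition hgrad hα1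
    exact mem_iUnion.2 ((tendsto_pow_mul_nhdsGT_zero hβ0 hβ1 hδ₀).eventually hsmall).exists
  obtain ⟨j₀, hj₀⟩ := hK.exists_bound_of_subset_iUnion_nat
    (fun j => isOpen_setOf_strictArmijoCondition hf.continuous hf.continuous_gradient α _) hcover
  refine ⟨j₀, fun x hx => ?_⟩
  obtain ⟨j, hj, hstrict⟩ := hj₀ x hx
  exact ⟨j, hj, le_of_lt hstrict⟩

/-- Let `f : ℝ^m → ℝ` be `C¹`, `α, β ∈ (0,1)`, `δ₀ > 0`, and `K ⊆ ℝ^m`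
compact with `inf_{x ∈ K} ‖∇f(x)‖ > 0`. Then the backtracking learning rates are uniformly
bounded below on `K`: there is `j₀ ∈ ℕ` such that for every `x ∈ K` some step size
`δ ∈ {β^j δ₀ : 0 ≤ j ≤ j₀}` satisfies Armijo's condition at `x`. -/
theorem backtracking_rate_uniform_lower_bound_on_compact
    {m : ℕ} (f : EuclideanSpace ℝ (Fin m) → ℝ) (hf : ContDiff ℝ 1 f)
    (α β δ₀ : ℝ) (hα0 : 0 < α) (hα1 : α < 1) (hβ0 : 0 < β) (hβ1 : β < 1) (hδ₀ : 0 < δ₀)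
    (K : Set (EuclideanSpace ℝ (Fin m))) (hK : IsCompact K)
    (hinf : ∃ c > 0, ∀ x ∈ K, c ≤ ‖∇ f x‖) :
    ∃ j₀ : ℕ, ∀ x ∈ K, ∃ j ≤ j₀, ArmijoCondition f α (β ^ j * δ₀) x :=
  backtracking_rate_uniform_lower_bound_on_compact_general f hf α β δ₀ hα1 hβ0 hβ1 hδ₀ K hK hinf
end

section
/- Let f : ℝ^m → ℝ be C¹, let α, β ∈ (0,1), δ₀ > 0, and let (x_n) be the backtracking gradient descent sequence from an arbitrary initial point x₀ ∈ ℝ^m. If x_∞ is a cluster point of (x_n), then ∇f(x_∞) = 0. -/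
open Gradient Filter Asymptotics RealInnerProductSpace Topology Set

/-- `δsel` is the backtracking learning rate function: `δsel x` is the largest number of the
form `β^j δ₀` (i.e. the one with the smallest exponent `j`) satisfying Armijo's condition
at `x`. -/
def IsBacktrackingRate {E : Type*} [NormedAddCommGroup E] [InnerProductSpace ℝ E]
    [CompleteSpace E] (f : E → ℝ) (α β δ₀ : ℝ) (δsel : E → ℝ) : Prop :=
  ∀ x : E, ∃ j : ℕ, δsel x = β ^ j * δ₀ ∧ ArmijoCondition f α (δsel x) x ∧
    ∀ i < j, ¬ ArmijoCondition f α (β ^ i * δ₀) x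

theorem tendsto_zero_of_le_sub_of_mapClusterPt {u d : ℕ → ℝ} (hd : ∀ n, 0 ≤ d n)
    (hud : ∀ n, u (n + 1) ≤ u n - d n) {a : ℝ} (ha : MapClusterPt a atTop u) :
    Tendsto d atTop (𝓝 0) := by
  have hanti : Antitone u := antitone_nat_of_succ_le fun n => by linarith [hud n, hd n]
  obtain ⟨φ, hφ, hφa⟩ := ha.tendsto_subseq
  have hua : Tendsto u atTop (𝓝 a) := by
    rcases tendsto_atTop_of_antitone hanti with hbot | ⟨l, hl⟩
    · exact absurd hφa (not_tendsto_nhds_of_tendsto_atBot (hbot.comp hφ.tendsto_atTop) a)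
    · rwa [tendsto_nhds_unique hφa (hl.comp hφ.tendsto_atTop)]
  have hdiff : Tendsto (fun n => u n - u (n + 1)) atTop (𝓝 0) := by
    simpa using hua.sub (hua.comp (tendsto_add_atTop_nat 1))
  exact tendsto_of_tendsto_of_tendsto_of_le_of_le tendsto_const_nhds hdiff hd
    fun n => by linarith [hud n]

section Backtracking

variable {E : Type*} [NormedAddCommGroup E] [InnerProductSpace ℝ E] [CompleteSpace E]
  {f : E → ℝ} {α β δ₀ : ℝ} {δsel : E → ℝ}

theorem ContDiffAt.continuousAt_gradient {p : E} (hf : ContDiffAt ℝ 1 f p) :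
    ContinuousAt (∇ f) p :=
  (InnerProductSpace.toDual ℝ E).symm.continuous.continuousAt.comp
    (hf.continuousAt_fderiv one_ne_zero)

/-- Up to `o(t ‖∇f y‖)`, a step `t` from `y` lowers `f` by `t ⟪∇f p, ∇f y⟫ ≈ t ‖∇f p‖²`,
which beats `α t ‖∇f y‖²` because `α < 1`; `c` is half of the room left by `α`. -/
theorem eventually_armijoCondition {p : E} (hf : ContDiffAt ℝ 1 f p) (hα : α < 1)
    (hp : ∇ f p ≠ 0) : ∀ᶠ q in 𝓝 p ×ˢ 𝓝[>] 0, ArmijoCondition f α q.2 q.1 := by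
  set c := (1 - α) * ‖∇ f p‖ / 2
  have hg : 0 < ‖∇ f p‖ := norm_pos_iff.2 hp
  have hc : 0 < c := by
    have : 0 < 1 - α := sub_pos.2 hα
    positivity
  have hgrad := hf.continuousAt_gradient
  have hmargin : ∀ᶠ y in 𝓝 p, 0 < ⟪∇ f p, ∇ f y⟫ - α * ‖∇ f y‖ ^ 2 - c * ‖∇ f y‖ := by
    have hlim : Tendsto (fun y => ⟪∇ f p, ∇ f y⟫ - α * ‖∇ f y‖ ^ 2 - c * ‖∇ f y‖) (𝓝 p)
        (𝓝 (⟪∇ f p, ∇ f p⟫ - α * ‖∇ f p‖ ^ 2 - c * ‖∇ f p‖)) :=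
      ((tendsto_const_nhds.inner hgrad).sub ((hgrad.norm.pow 2).const_mul α)).sub
        (hgrad.norm.const_mul c)
    refine hlim.eventually_const_lt ?_
    have hval : ‖∇ f p‖ ^ 2 - α * ‖∇ f p‖ ^ 2 - c * ‖∇ f p‖ = c * ‖∇ f p‖ := by
      simp only [c]
      ring
    rw [real_inner_self_eq_norm_sq, hval]
    positivity
  have hfst : Tendsto (fun q : E × ℝ => q.1) (𝓝 p ×ˢ 𝓝[>] 0) (𝓝 p) := tendsto_fst
  have hsnd : Tendsto (fun q : E × ℝ => q.2) (𝓝 p ×ˢ 𝓝[>] 0) (𝓝 0) :=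
    tendsto_snd.mono_right nhdsWithin_le_nhds
  have htrial : Tendsto (fun q : E × ℝ => (q.1, q.1 - q.2 • ∇ f q.1)) (𝓝 p ×ˢ 𝓝[>] 0)
      (𝓝 (p, p)) := by
    refine hfst.prodMk_nhds ?_
    simpa using hfst.sub (hsnd.smul (hgrad.tendsto.comp hfst))
  have hlo := ((hf.hasStrictFDerivAt one_ne_zero).isLittleO.comp_tendsto htrial).def hc
  filter_upwards [hlo, hfst.eventually hmargin,
    tendsto_snd.eventually (self_mem_nhdsWithin (s := Ioi (0 : ℝ)))] with ⟨y, t⟩ hlo hm ht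
  simp only [ArmijoCondition, Function.comp, sub_sub_cancel, map_smul, ← inner_gradient_left,
    smul_eq_mul, norm_smul, Real.norm_eq_abs, abs_of_pos (show (0 : ℝ) < t from ht)]
    at hlo hm ht ⊢
  nlinarith [mul_pos ht hm, (abs_le.1 hlo).1]

namespace IsBacktrackingRate

theorem pos (h : IsBacktrackingRate f α β δ₀ δsel) (hβ : 0 < β) (hδ₀ : 0 < δ₀) (y : E) :
    0 < δsel y := by
  obtain ⟨j, hj, -, -⟩ := h y
  rw [hj]
  positivity

/-- Backtracking stops at `δ₀`, or one step after a rejected `β^j δ₀`, which must be `≥ ε`. -/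
theorem min_le (h : IsBacktrackingRate f α β δ₀ δsel) (hβ : 0 < β) (hδ₀ : 0 < δ₀) {ε : ℝ}
    {y : E} (hε : ∀ t ∈ Ioo 0 ε, ArmijoCondition f α t y) : min δ₀ (β * ε) ≤ δsel y := by
  obtain ⟨j, hj, -, hfirst⟩ := h y
  rcases j with _ | j
  · simp [hj]
  · have hεle : ε ≤ β ^ j * δ₀ := by
      by_contra! hlt
      exact hfirst j j.lt_succ_self (hε _ ⟨by positivity, hlt⟩)
    calc min δ₀ (β * ε) ≤ β * ε := min_le_right _ _
      _ ≤ β * (β ^ j * δ₀) := by gcongr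
      _ = δsel y := by rw [hj]; ring

theorem exists_pos_eventually_le (h : IsBacktrackingRate f α β δ₀ δsel) (hβ : 0 < β)
    (hδ₀ : 0 < δ₀) {p : E} (hf : ContDiffAt ℝ 1 f p) (hα : α < 1) (hp : ∇ f p ≠ 0) :
    ∃ c > 0, ∀ᶠ y in 𝓝 p, c ≤ δsel y := by
  obtain ⟨P, hP, Q, hQ, hPQ⟩ := eventually_prod_iff.1 (eventually_armijoCondition hf hα hp)
  obtain ⟨ε, hε, hεQ⟩ := mem_nhdsGT_iff_exists_Ioo_subset.1 hQ
  refine ⟨min δ₀ (β * ε), lt_min hδ₀ (mul_pos hβ hε), ?_⟩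
  filter_upwards [hP] with y hy
  exact h.min_le hβ hδ₀ fun t ht => hPQ hy (hεQ ht)

theorem tendsto_sufficientDecrease_zero (h : IsBacktrackingRate f α β δ₀ δsel) (hα : 0 ≤ α)
    (hβ : 0 < β) (hδ₀ : 0 < δ₀) {x : ℕ → E}
    (hupd : ∀ n, x (n + 1) = x n - δsel (x n) • ∇ f (x n))
    {p : E} (hf : ContinuousAt f p) (hcl : MapClusterPt p atTop x) :
    Tendsto (fun n => α * δsel (x n) * ‖∇ f (x n)‖ ^ 2) atTop (𝓝 0) := by
  refine tendsto_zero_of_le_sub_of_mapClusterPt (u := f ∘ x)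
    (fun n => by have := h.pos hβ hδ₀ (x n); positivity) (fun n => ?_)
    (hcl.continuousAt_comp hf)
  obtain ⟨-, -, harmijo, -⟩ := h (x n)
  simp only [Function.comp_apply, hupd n]
  unfold ArmijoCondition at harmijo
  linarith

end IsBacktrackingRate

end Backtracking

theorem backtracking_GD_cluster_point_is_critical_general
    {m : ℕ} (f : EuclideanSpace ℝ (Fin m) → ℝ) (hf : ContDiff ℝ 1 f)
    (α β δ₀ : ℝ) (hα0 : 0 < α) (hα1 : α < 1) (hβ0 : 0 < β) (hδ₀ : 0 < δ₀)
    (δsel : EuclideanSpace ℝ (Fin m) → ℝ) (hδsel : IsBacktrackingRate f α β δ₀ δsel)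
    (x : ℕ → EuclideanSpace ℝ (Fin m))
    (hupd : ∀ n, x (n + 1) = x n - δsel (x n) • ∇ f (x n))
    (xlim : EuclideanSpace ℝ (Fin m)) (hcl : MapClusterPt xlim Filter.atTop x) :
    ∇ f xlim = 0 := by
  by_contra hG
  obtain ⟨c, hc, hδc⟩ := hδsel.exists_pos_eventually_le hβ0 hδ₀ hf.contDiffAt hα1 hG
  have hdec := hδsel.tendsto_sufficientDecrease_zero hα0.le hβ0 hδ₀ hupd
    hf.continuous.continuousAt hcl
  obtain ⟨φ, hφ, hxφ⟩ := hcl.tendsto_subseq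
  have hgrad : Tendsto (fun k => α * c * ‖∇ f (x (φ k))‖ ^ 2) atTop
      (𝓝 (α * c * ‖∇ f xlim‖ ^ 2)) :=
    ((hf.contDiffAt.continuousAt_gradient.tendsto.comp hxφ).norm.pow 2).const_mul _
  have hle : α * c * ‖∇ f xlim‖ ^ 2 ≤ 0 := by
    refine le_of_tendsto_of_tendsto hgrad (hdec.comp hφ.tendsto_atTop) ?_
    filter_upwards [hxφ.eventually hδc] with k hk
    simp only [Function.comp_apply] at hk ⊢
    gcongr
  have : 0 < ‖∇ f xlim‖ := norm_pos_iff.2 hG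
  exact hle.not_gt (by positivity)

/-- Let `f : ℝ^m → ℝ` be `C¹`, `α, β ∈ (0,1)`, `δ₀ > 0`, and `(x n)` the
backtracking gradient descent sequence `x_{n+1} = x_n − δ(x_n)∇f(x_n)` from an arbitrary
initial point. Any cluster point `xlim` of `(x n)` satisfies `∇f(xlim) = 0`. -/
theorem backtracking_GD_cluster_point_is_critical
    {m : ℕ} (f : EuclideanSpace ℝ (Fin m) → ℝ) (hf : ContDiff ℝ 1 f)
    (α β δ₀ : ℝ) (hα0 : 0 < α) (hα1 : α < 1) (hβ0 : 0 < β) (hβ1 : β < 1) (hδ₀ : 0 < δ₀)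
    (δsel : EuclideanSpace ℝ (Fin m) → ℝ) (hδsel : IsBacktrackingRate f α β δ₀ δsel)
    (x : ℕ → EuclideanSpace ℝ (Fin m))
    (hupd : ∀ n, x (n + 1) = x n - δsel (x n) • ∇ f (x n))
    (xlim : EuclideanSpace ℝ (Fin m)) (hcl : MapClusterPt xlim Filter.atTop x) :
    ∇ f xlim = 0 :=
  backtracking_GD_cluster_point_is_critical_general f hf α β δ₀ hα0 hα1 hβ0 hδ₀ δsel hδsel x hupd
    xlim hcl
end

section
/- Let f : ℝ^m → ℝ be C¹ and suppose there are continuous functions L : ℝ^m → (0,∞) and r : ℝ^m → (0,∞) such that ‖∇f(x+v) − ∇f(x)‖ ≤ L(x)‖v‖ for all x ∈ ℝ^m and all v with ‖v‖ < r(x). Fix α, β ∈ (0,1) and δ₀ > 0, and let (x_n) be the local backtracking gradient descent sequence from any initial point x₀. Then for all n, f(x_n − δ̂(x_n)∇f(x_n)) − f(x_n) ≤ −(1−α) δ̂(x_n) ‖∇f(x_n)‖². -/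
/-!
Along the segment `t ↦ y + t • v` with `‖v‖ < r y`, the local Lipschitz bound on `∇ f` integrates
to the descent lemma `f (y + v) ≤ f y + ⟪∇ f y, v⟫ + L y / 2 * ‖v‖ ^ 2`. The condition
`δ̂ ‖∇ f y‖ < r y / 2` keeps the gradient step inside that ball, and `δ̂ L y < α` bounds the
quadratic term by `α δ̂ ‖∇ f y‖ ^ 2`.
-/

open Gradient

/-- `δhat` is the local backtracking learning rate function associated with `f`, the local
Lipschitz-constant function `L`, the radius function `r`, and parameters `α, β, δ₀`:
`δhat x` is the largest number of the form `β^j δ₀` (i.e. the one with the smallest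
exponent `j`) satisfying both `δ < α / L x` and `δ ‖∇f(x)‖ < r x / 2`. -/
def IsLocalBacktrackingRate {E : Type*} [NormedAddCommGroup E] [InnerProductSpace ℝ E]
    [CompleteSpace E] (f : E → ℝ) (L r : E → ℝ) (α β δ₀ : ℝ) (δhat : E → ℝ) : Prop :=
  ∀ x : E, ∃ j : ℕ, δhat x = β ^ j * δ₀ ∧
    (δhat x < α / L x ∧ δhat x * ‖∇ f x‖ < r x / 2) ∧
    ∀ i < j, ¬ (β ^ i * δ₀ < α / L x ∧ β ^ i * δ₀ * ‖∇ f x‖ < r x / 2)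

section DescentLemma

variable {E : Type*} [NormedAddCommGroup E] [InnerProductSpace ℝ E] [CompleteSpace E]
  {f : E → ℝ}

theorem hasDerivAt_comp_add_smul (hf : Differentiable ℝ f) (y v : E) (t : ℝ) :
    HasDerivAt (fun s : ℝ => f (y + s • v)) (inner ℝ (∇ f (y + t • v)) v) t := by
  have hline : HasDerivAt (fun s : ℝ => y + s • v) v t := by
    simpa using ((hasDerivAt_id t).smul_const v).const_add y
  exact ((hf _).hasGradientAt.hasFDerivAt.comp_hasDerivAt t hline).congr_deriv
    (by simp [InnerProductSpace.toDual])

theorem sub_le_inner_gradient_add_of_lipschitz_near (hf : Differentiable ℝ f) {K ρ : ℝ}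
    {y v : E} (hlip : ∀ w, ‖w‖ < ρ → ‖∇ f (y + w) - ∇ f y‖ ≤ K * ‖w‖) (hv : ‖v‖ < ρ) :
    f (y + v) - f y ≤ inner ℝ (∇ f y) v + K / 2 * ‖v‖ ^ 2 := by
  set ψ : ℝ → ℝ := fun t => f (y + t • v) - t * inner ℝ (∇ f y) v - K / 2 * ‖v‖ ^ 2 * t ^ 2
  have hψ : ∀ t, HasDerivAt ψ
      (inner ℝ (∇ f (y + t • v)) v - inner ℝ (∇ f y) v - K * ‖v‖ ^ 2 * t) t := fun t => by
    refine (((hasDerivAt_comp_add_smul hf y v t).sub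
      ((hasDerivAt_id' t).mul_const (inner ℝ (∇ f y) v))).sub
      ((hasDerivAt_pow 2 t).const_mul (K / 2 * ‖v‖ ^ 2))).congr_deriv ?_
    norm_num
    ring
  have hψ' : ∀ t ∈ Set.Ioo (0 : ℝ) 1,
      inner ℝ (∇ f (y + t • v)) v - inner ℝ (∇ f y) v - K * ‖v‖ ^ 2 * t ≤ 0 := by
    rintro t ⟨ht0, ht1⟩
    have htv : ‖t • v‖ = t * ‖v‖ := by rw [norm_smul, Real.norm_of_nonneg ht0.le]
    refine sub_nonpos.2 ?_
    calc inner ℝ (∇ f (y + t • v)) v - inner ℝ (∇ f y) v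
        = inner ℝ (∇ f (y + t • v) - ∇ f y) v := (inner_sub_left _ _ _).symm
      _ ≤ ‖∇ f (y + t • v) - ∇ f y‖ * ‖v‖ := real_inner_le_norm _ _
      _ ≤ K * ‖t • v‖ * ‖v‖ := by
        gcongr
        exact hlip _ (by rw [htv]; nlinarith [norm_nonneg v])
      _ = K * ‖v‖ ^ 2 * t := by rw [htv]; ring
  have hanti : AntitoneOn ψ (Set.Icc 0 1) := by
    refine antitoneOn_of_hasDerivWithinAt_nonpos (convex_Icc 0 1)
      (fun t _ => (hψ t).continuousAt.continuousWithinAt) (fun t _ => (hψ t).hasDerivWithinAt) ?_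
    rw [interior_Icc]
    exact hψ'
  have h10 : ψ 1 ≤ ψ 0 := hanti (by norm_num) (by norm_num) zero_le_one
  simp only [ψ, one_smul, zero_smul, add_zero] at h10
  linarith

theorem sub_smul_gradient_armijo_of_lipschitz_near (hf : Differentiable ℝ f) {K ρ α δ : ℝ}
    {y : E} (hlip : ∀ w, ‖w‖ < ρ → ‖∇ f (y + w) - ∇ f y‖ ≤ K * ‖w‖) (hδ : 0 ≤ δ)
    (hδK : δ * K ≤ 2 * α) (hstep : δ * ‖∇ f y‖ < ρ) :
    f (y - δ • ∇ f y) - f y ≤ -((1 - α) * δ * ‖∇ f y‖ ^ 2) := by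
  have hnorm : ‖-(δ • ∇ f y)‖ = δ * ‖∇ f y‖ := by
    rw [norm_neg, norm_smul, Real.norm_of_nonneg hδ]
  have hinner : inner ℝ (∇ f y) (-(δ • ∇ f y)) = -(δ * ‖∇ f y‖ ^ 2) := by
    rw [inner_neg_right, real_inner_smul_right, real_inner_self_eq_norm_sq]
  have hdescent := sub_le_inner_gradient_add_of_lipschitz_near hf hlip (hnorm ▸ hstep)
  rw [← sub_eq_add_neg, hinner, hnorm] at hdescent
  nlinarith [mul_nonneg (mul_nonneg hδ (sq_nonneg ‖∇ f y‖)) (sub_nonneg.2 hδK)]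

end DescentLemma

theorem local_backtracking_GD_descent_general
    {m : ℕ} (f : EuclideanSpace ℝ (Fin m) → ℝ) (hf : ContDiff ℝ 1 f)
    (L r : EuclideanSpace ℝ (Fin m) → ℝ)
    (hLpos : ∀ x, 0 < L x) (hrpos : ∀ x, 0 < r x)
    (hlip : ∀ x v, ‖v‖ < r x → ‖∇ f (x + v) - ∇ f x‖ ≤ L x * ‖v‖)
    (α β δ₀ : ℝ) (hα0 : 0 < α) (hβ0 : 0 < β) (hδ₀ : 0 < δ₀)
    (δhat : EuclideanSpace ℝ (Fin m) → ℝ)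
    (hδhat : IsLocalBacktrackingRate f L r α β δ₀ δhat)
    (x : ℕ → EuclideanSpace ℝ (Fin m)) :
    ∀ n, f (x n - δhat (x n) • ∇ f (x n)) - f (x n) ≤
      -((1 - α) * δhat (x n) * ‖∇ f (x n)‖ ^ 2) := by
  intro n
  obtain ⟨j, hj, ⟨hδL, hδr⟩, -⟩ := hδhat (x n)
  have hδL' : δhat (x n) * L (x n) < α := (lt_div_iff₀ (hLpos _)).1 hδL
  exact sub_smul_gradient_armijo_of_lipschitz_near (hf.differentiable one_ne_zero) (hlip (x n))
    (by rw [hj]; positivity) (by linarith) (by linarith [hrpos (x n)])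

/-- Let `f : ℝ^m → ℝ` be `C¹` with continuous functions
`L, r : ℝ^m → (0,∞)` such that `‖∇f(x+v) − ∇f(x)‖ ≤ L(x)‖v‖` whenever `‖v‖ < r(x)`. Then the
local backtracking gradient descent sequence satisfies the descent estimate
`f(x_n − δ̂(x_n)∇f(x_n)) − f(x_n) ≤ −(1−α) δ̂(x_n) ‖∇f(x_n)‖²` for all `n`. -/
theorem local_backtracking_GD_descent
    {m : ℕ} (f : EuclideanSpace ℝ (Fin m) → ℝ) (hf : ContDiff ℝ 1 f)
    (L r : EuclideanSpace ℝ (Fin m) → ℝ) (hLcont : Continuous L) (hrcont : Continuous r)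
    (hLpos : ∀ x, 0 < L x) (hrpos : ∀ x, 0 < r x)
    (hlip : ∀ x v, ‖v‖ < r x → ‖∇ f (x + v) - ∇ f x‖ ≤ L x * ‖v‖)
    (α β δ₀ : ℝ) (hα0 : 0 < α) (hα1 : α < 1) (hβ0 : 0 < β) (hβ1 : β < 1) (hδ₀ : 0 < δ₀)
    (δhat : EuclideanSpace ℝ (Fin m) → ℝ)
    (hδhat : IsLocalBacktrackingRate f L r α β δ₀ δhat)
    (x : ℕ → EuclideanSpace ℝ (Fin m))
    (hupd : ∀ n, x (n + 1) = x n - δhat (x n) • ∇ f (x n)) :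
    ∀ n, f (x n - δhat (x n) • ∇ f (x n)) - f (x n) ≤
      -((1 - α) * δhat (x n) * ‖∇ f (x n)‖ ^ 2) :=
  local_backtracking_GD_descent_general f hf L r hLpos hrpos hlip α β δ₀ hα0 hβ0 hδ₀ δhat hδhat x
end

section
/- Let f : ℝ^m → ℝ be C¹ with locally Lipschitz continuous gradient, and fix α ∈ (0,1) and δ₀ > 0. Then there exists a smooth (C^∞) function h : ℝ^m → (0, δ₀] such that f(x − h(x)∇f(x)) − f(x) ≤ −α h(x)‖∇f(x)‖² for every x ∈ ℝ^m. -/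
open Gradient Set Filter Metric InnerProductSpace Manifold FormalMultilinearSeries
open scoped RealInnerProductSpace

section DescentStep
variable {E : Type*} [NormedAddCommGroup E] [InnerProductSpace ℝ E] [CompleteSpace E]

lemma descent_step (f : E → ℝ) (hf : Differentiable ℝ f)
    {s : Set E} (hs : Convex ℝ s) {K : NNReal} (Hlip : LipschitzOnWith K (∇ f) s)
    {y : E} {t : ℝ} (ht : 0 ≤ t) (hy : y ∈ s) (hb : y - t • ∇ f y ∈ s) :
    f (y - t • ∇ f y) - f y ≤ -(t * ‖∇ f y‖ ^ 2) + K * t ^ 2 * ‖∇ f y‖ ^ 2 := by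
  set b := y - t • ∇ f y with hbdef
  have hseg : segment ℝ y b ⊆ s := hs.segment_subset hy hb
  have hby : ‖b - y‖ = t * ‖∇ f y‖ := by
    rw [hbdef]
    simp [norm_smul, abs_of_nonneg ht]
  set g : E → ℝ := fun z => f z - (fderiv ℝ f y) z with hg
  have key : ‖g b - g y‖ ≤ (K * (t * ‖∇ f y‖)) * ‖b - y‖ := by
    apply Convex.norm_image_sub_le_of_norm_hasFDerivWithin_le
      (f' := fun z => fderiv ℝ f z - fderiv ℝ f y) ?_ ?_ (convex_segment y b)
      (left_mem_segment ℝ y b) (right_mem_segment ℝ y b)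
    · intro z hz
      exact (((hf z).hasFDerivAt.sub ((fderiv ℝ f y).hasFDerivAt)).hasFDerivWithinAt)
    · intro z hz
      have hzy : ‖z - y‖ ≤ ‖b - y‖ := by
        have : segment ℝ y b ⊆ closedBall y (dist b y) :=
          (convex_closedBall y (dist b y)).segment_subset (by simp [dist_nonneg]) (by simp)
        have := this hz
        simpa [dist_eq_norm] using this
      have heq : ∀ w : E, fderiv ℝ f w = toDual ℝ E (∇ f w) := fun w => by
        rw [gradient, (toDual ℝ E).apply_symm_apply]
      have : ‖fderiv ℝ f z - fderiv ℝ f y‖ = ‖∇ f z - ∇ f y‖ := by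
        rw [heq z, heq y, ← map_sub]
        exact (toDual ℝ E).norm_map _
      rw [this]
      calc ‖∇ f z - ∇ f y‖ ≤ K * ‖z - y‖ := by
            have := Hlip.dist_le_mul z (hseg hz) y (hseg (left_mem_segment ℝ y b))
            simpa [dist_eq_norm] using this
        _ ≤ K * ‖b - y‖ := by gcongr
        _ = K * (t * ‖∇ f y‖) := by rw [hby]
  have hgb : g b - g y = f b - f y + t * ‖∇ f y‖ ^ 2 := by
    have h1 : g b - g y = f b - f y - (fderiv ℝ f y) (b - y) := by
      simp only [hg, map_sub]
      ring
    have h2 : (fderiv ℝ f y) (b - y) = -(t * ‖∇ f y‖ ^ 2) := by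
      have heq : fderiv ℝ f y = toDual ℝ E (∇ f y) := by
        rw [gradient, (toDual ℝ E).apply_symm_apply]
      rw [heq]
      have : b - y = -(t • ∇ f y) := by rw [hbdef]; abel
      rw [this, map_neg, map_smul]
      rw [toDual_apply_apply, real_inner_self_eq_norm_sq]
      ring_nf
    rw [h1, h2]
    ring
  rw [hby, hgb] at key
  have habs : f b - f y + t * ‖∇ f y‖ ^ 2 ≤ (K * (t * ‖∇ f y‖)) * (t * ‖∇ f y‖) :=
    le_trans (le_abs_self _) (by simpa [Real.norm_eq_abs] using key)
  nlinarith [habs]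

end DescentStep

/-- Given any sequence `γ` with `1 ≤ γ n`, there is an entire (real-analytic on all of `ℝ`)
function `W`, nonnegative and monotone on `[0, ∞)`, with `γ n ≤ W (n^2)` for all `n`. -/
lemma exists_entire_dominating (γ : ℕ → ℝ) (hγ : ∀ n, 1 ≤ γ n) :
    ∃ W : ℝ → ℝ, AnalyticOnNhd ℝ W Set.univ ∧ (∀ t, 0 ≤ t → 0 ≤ W t) ∧
      (∀ t₁ t₂, 0 ≤ t₁ → t₁ ≤ t₂ → W t₁ ≤ W t₂) ∧
      (∀ n : ℕ, γ n ≤ W ((n : ℝ) ^ 2)) := by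
  have hex : ∀ m : ℕ, ∃ k : ℕ, (2:ℝ) ^ m * γ m < 2 ^ k := fun m =>
    pow_unbounded_of_one_lt _ one_lt_two
  set N : ℕ → ℕ := fun m => Classical.choose (hex m) with hN
  have hNspec : ∀ m, (2:ℝ) ^ m * γ m < 2 ^ N m := fun m => Classical.choose_spec (hex m)
  set K : ℕ → ℕ := fun m => m + 1 + ∑ i ∈ Finset.range (m+1), N i with hK
  have hKmono : StrictMono K := by
    apply strictMono_nat_of_lt_succ
    intro m
    simp only [hK, Finset.sum_range_succ]
    omega
  have hKge : ∀ m, m + 1 ≤ K m := fun m => by simp [hK]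
  have hKN : ∀ m, N m ≤ K m := by
    intro m
    have h1 : N m ≤ ∑ i ∈ Finset.range (m+1), N i :=
      Finset.single_le_sum (f := N) (fun i _ => Nat.zero_le _) (Finset.self_mem_range_succ m)
    have h2 : K m = m + 1 + ∑ i ∈ Finset.range (m+1), N i := rfl
    omega
  set a : ℕ → ℝ := fun j => (if j = 0 then γ 0 else 0) +
      ∑ m ∈ Finset.range (j+1), if K m = j then (2:ℝ)⁻¹ ^ m * ((((m:ℝ))^2/2)⁻¹) ^ j else 0
    with ha
  have ha_nonneg : ∀ j, 0 ≤ a j := by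
    intro j
    apply add_nonneg
    · split
      · linarith [hγ 0]
      · exact le_rfl
    · apply Finset.sum_nonneg
      intro m _
      split <;> positivity
  have hK0 : K 0 ≠ 0 := by have := hKge 0; omega
  have ha0 : a 0 = γ 0 := by
    simp [ha, Finset.sum_range_one, hK0]
  have haK : ∀ m : ℕ, 1 ≤ m → (2:ℝ)⁻¹ ^ m * ((((m:ℝ))^2/2)⁻¹) ^ (K m) ≤ a (K m) := by
    intro m hm
    have h1 : (0:ℝ) ≤ (if (0:ℕ) = K m then γ 0 else 0) := by
      split
      · linarith [hγ 0]
      · exact le_rfl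
    have hmem : m ∈ Finset.range (K m + 1) := Finset.mem_range.2 (by have := hKge m; omega)
    have h2 : (2:ℝ)⁻¹ ^ m * ((((m:ℝ))^2/2)⁻¹) ^ (K m) ≤
        ∑ m' ∈ Finset.range (K m + 1), if K m' = K m then
          (2:ℝ)⁻¹ ^ m' * ((((m':ℝ))^2/2)⁻¹) ^ (K m) else 0 := by
      have := Finset.single_le_sum (f := fun m' => if K m' = K m then
          (2:ℝ)⁻¹ ^ m' * ((((m':ℝ))^2/2)⁻¹) ^ (K m) else 0)
        (fun i _ => by split <;> positivity) hmem
      simpa using this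
    calc (2:ℝ)⁻¹ ^ m * ((((m:ℝ))^2/2)⁻¹) ^ (K m) ≤ _ := h2
      _ ≤ a (K m) := by
          simp only [ha]
          have h0 : (0:ℝ) ≤ (if K m = 0 then γ 0 else 0) := by
            split
            · linarith [hγ 0]
            · exact le_rfl
          exact le_add_of_nonneg_left h0
  clear_value N K a
  set p := FormalMultilinearSeries.ofScalars ℝ a with hp
  have hpnorm : ∀ n, ‖p n‖ = a n := by
    intro n
    rw [hp, FormalMultilinearSeries.ofScalars_norm, Real.norm_eq_abs, abs_of_nonneg (ha_nonneg n)]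
  have hrad : p.radius = ⊤ := by
    apply ENNReal.eq_top_of_forall_nnreal_le
    intro r
    set M₀ : ℕ := ⌈(2:ℝ) * r⌉₊ with hM₀
    set C₀ : ℝ := (1 + 2 * (r:ℝ)) ^ (K M₀) with hC₀
    have hC₀1 : (1:ℝ) ≤ C₀ := one_le_pow₀ (by linarith [NNReal.coe_nonneg r])
    apply p.le_radius_of_bound (γ 0 + 2 * C₀)
    intro j
    rw [hpnorm]
    have expand : a j * (r:ℝ)^j = (if j = 0 then γ 0 else 0) * (r:ℝ)^j +
        ∑ m ∈ Finset.range (j+1),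
          (if K m = j then (2:ℝ)⁻¹ ^ m * ((((m:ℝ))^2/2)⁻¹) ^ j else 0) * (r:ℝ)^j := by
      rw [ha]
      rw [← Finset.sum_mul, add_mul]
    rw [expand]
    have part1 : (if j = 0 then γ 0 else 0) * (r:ℝ)^j ≤ γ 0 := by
      split
      · rename_i hj; subst hj; simp
      · simp [le_of_lt (lt_of_lt_of_le zero_lt_one (hγ 0))]
    have part2 : ∑ m ∈ Finset.range (j+1),
        (if K m = j then (2:ℝ)⁻¹ ^ m * ((((m:ℝ))^2/2)⁻¹) ^ j else 0) * (r:ℝ)^j ≤ 2 * C₀ := by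
      have hterm : ∀ m ∈ Finset.range (j+1),
          (if K m = j then (2:ℝ)⁻¹ ^ m * ((((m:ℝ))^2/2)⁻¹) ^ j else 0) * (r:ℝ)^j ≤
            (1/(2:ℝ)) ^ m * C₀ := by
        intro m _
        split
        · rename_i hKm
          rcases Nat.eq_zero_or_pos m with hm0 | hm1
          · subst hm0
            have hj1 : j ≠ 0 := by rw [← hKm]; exact hK0
            rw [show ((((0:ℕ):ℝ))^2/2)⁻¹ = 0 by norm_num, zero_pow hj1, mul_zero, zero_mul]
            positivity
          · have hmr : (0:ℝ) < (m:ℝ) := by exact_mod_cast hm1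
            have hm2 : (0:ℝ) < (m:ℝ)^2 := by positivity
            have hinv : ((((m:ℝ))^2/2)⁻¹ : ℝ) = 2 / (m:ℝ)^2 := by rw [inv_div]
            have key : (2:ℝ)⁻¹ ^ m * ((((m:ℝ))^2/2)⁻¹) ^ j * (r:ℝ)^j =
                (1/(2:ℝ)) ^ m * ((2 * r / (m:ℝ)^2) ^ j) := by
              rw [hinv, mul_assoc, ← mul_pow]
              ring_nf
            rw [key]
            have hbase : (0:ℝ) ≤ 2 * (r:ℝ) / (m:ℝ)^2 := by positivity
            have hpow : (2 * (r:ℝ) / (m:ℝ)^2) ^ j ≤ C₀ := by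
              rcases le_or_gt (2 * (r:ℝ)) ((m:ℝ)^2) with hcs | hcs
              · have hb1 : 2 * (r:ℝ) / (m:ℝ)^2 ≤ 1 := by
                  rw [div_le_one hm2]; exact hcs
                calc (2 * (r:ℝ) / (m:ℝ)^2) ^ j ≤ (1:ℝ) ^ j := pow_le_pow_left₀ hbase hb1 j
                  _ = 1 := one_pow j
                  _ ≤ C₀ := hC₀1
              · have hm1' : (1:ℝ) ≤ (m:ℝ) := by exact_mod_cast hm1
                have hmM : (m:ℝ) < 2 * r := by nlinarith
                have hmM₀ : m ≤ M₀ := by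
                  have h2r : (2:ℝ) * r ≤ (M₀:ℝ) := Nat.le_ceil _
                  exact_mod_cast Nat.cast_le.1 (le_of_lt (lt_of_lt_of_le hmM h2r))
                have hb2 : 2 * (r:ℝ) / (m:ℝ)^2 ≤ 1 + 2 * r := by
                  rw [div_le_iff₀ hm2]
                  have hm2' : (1:ℝ) ≤ (m:ℝ)^2 := by nlinarith
                  nlinarith [NNReal.coe_nonneg r, mul_le_mul_of_nonneg_left hm2'
                    (by linarith [NNReal.coe_nonneg r] : (0:ℝ) ≤ 1 + 2 * (r:ℝ))]
                calc (2 * (r:ℝ) / (m:ℝ)^2) ^ j ≤ (1 + 2 * (r:ℝ)) ^ j :=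
                      pow_le_pow_left₀ hbase hb2 j
                  _ ≤ (1 + 2 * (r:ℝ)) ^ (K M₀) := by
                      apply pow_le_pow_right₀ (by linarith [NNReal.coe_nonneg r])
                      rw [← hKm]; exact hKmono.monotone hmM₀
                  _ = C₀ := rfl
            exact mul_le_mul_of_nonneg_left hpow (by positivity)
        · rw [zero_mul]
          positivity
      calc _ ≤ ∑ m ∈ Finset.range (j+1), (1/(2:ℝ)) ^ m * C₀ := Finset.sum_le_sum hterm
        _ = (∑ m ∈ Finset.range (j+1), (1/(2:ℝ)) ^ m) * C₀ := by rw [Finset.sum_mul]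
        _ ≤ 2 * C₀ := by
            apply mul_le_mul_of_nonneg_right (sum_geometric_two_le _) (by linarith)
    linarith
  have hsummable : ∀ t : ℝ, Summable (fun n => a n * t^n) := by
    intro t
    have h1 : (‖t‖₊ : ENNReal) < p.radius := by rw [hrad]; exact ENNReal.coe_lt_top
    have h2 := p.summable_norm_mul_pow h1
    apply Summable.of_norm_bounded h2
    intro n
    rw [hpnorm]
    rw [Real.norm_eq_abs, abs_mul, abs_of_nonneg (ha_nonneg n), abs_pow]
    simp [Real.norm_eq_abs]
  have hsum : ∀ t : ℝ, p.sum t = ∑' n, a n * t^n := by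
    intro t
    apply tsum_congr
    intro n
    rw [hp, FormalMultilinearSeries.ofScalars_apply_eq, smul_eq_mul]
  refine ⟨p.sum, ?_, ?_, ?_, ?_⟩
  · have h0 : 0 < p.radius := by rw [hrad]; exact ENNReal.zero_lt_top
    have hA := (p.hasFPowerSeriesOnBall h0).analyticOnNhd
    intro x _
    refine hA x ?_
    rw [hrad]
    simpa [EMetric.mem_ball] using edist_lt_top x 0
  · intro t ht
    rw [hsum]
    exact tsum_nonneg (fun n => mul_nonneg (ha_nonneg n) (pow_nonneg ht n))
  · intro t₁ t₂ h0 h12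
    rw [hsum, hsum]
    refine Summable.tsum_le_tsum (fun n => ?_) (hsummable t₁) (hsummable t₂)
    exact mul_le_mul_of_nonneg_left (pow_le_pow_left₀ h0 h12 n) (ha_nonneg n)
  · intro n
    rcases Nat.eq_zero_or_pos n with hn0 | hn1
    · subst hn0
      rw [hsum]
      simp only [Nat.cast_zero]
      have h1 : γ 0 ≤ a 0 * ((0:ℝ)^2)^0 := by simp [ha0]
      exact h1.trans (Summable.le_tsum (hsummable _) 0 (fun j hj => by
        rw [zero_pow two_ne_zero, zero_pow hj, mul_zero]))
    · rw [hsum]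
      have hnr : (0:ℝ) < (n:ℝ) := by exact_mod_cast hn1
      have hterm : γ n ≤ a (K n) * (((n:ℝ)^2))^(K n) := by
        have e1 : ((((n:ℝ))^2/2)⁻¹) ^ (K n) * (((n:ℝ)^2))^(K n) = 2 ^ (K n) := by
          rw [← mul_pow]
          congr 1
          field_simp
        have e2 : (2:ℝ)⁻¹ ^ n * ((((n:ℝ))^2/2)⁻¹) ^ (K n) * (((n:ℝ)^2))^(K n)
            = (2:ℝ)⁻¹ ^ n * 2 ^ (K n) := by
          rw [mul_assoc, e1]
        have e3 : γ n ≤ (2:ℝ)⁻¹ ^ n * 2 ^ (K n) := by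
          have h4 : (2:ℝ) ^ n * γ n < 2 ^ N n := hNspec n
          have h5 : (2:ℝ) ^ N n ≤ 2 ^ K n := pow_le_pow_right₀ one_le_two (hKN n)
          have h6 : (2:ℝ) ^ n * γ n ≤ 2 ^ K n := by linarith
          rw [inv_pow, inv_mul_eq_div, le_div_iff₀ (by positivity)]
          linarith [mul_comm ((2:ℝ)^n) (γ n)]
        calc γ n ≤ (2:ℝ)⁻¹ ^ n * ((((n:ℝ))^2/2)⁻¹) ^ (K n) * (((n:ℝ)^2))^(K n) := by
              rw [e2]; exact e3
          _ ≤ a (K n) * (((n:ℝ)^2))^(K n) := by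
              apply mul_le_mul_of_nonneg_right (haK n hn1) (pow_nonneg (sq_nonneg _) _)
      refine hterm.trans (Summable.le_tsum (hsummable _) (K n) (fun j _ => ?_))
      exact mul_nonneg (ha_nonneg j) (pow_nonneg (sq_nonneg _) _)


/-- Let `f : ℝ^m → ℝ` be `C¹` with locally Lipschitz gradient, and fix
`α ∈ (0,1)`, `δ₀ > 0`. Then there is a smooth function `h : ℝ^m → (0, δ₀]` such that
`f(x − h(x)∇f(x)) − f(x) ≤ −α h(x)‖∇f(x)‖²` for every `x`. -/
theorem exists_smooth_backtracking_rate
    {m : ℕ} (f : EuclideanSpace ℝ (Fin m) → ℝ) (hf : ContDiff ℝ 1 f)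
    (hlip : LocallyLipschitz (fun x => ∇ f x))
    (α δ₀ : ℝ) (hα0 : 0 < α) (hα1 : α < 1) (hδ₀ : 0 < δ₀) :
    ∃ h : EuclideanSpace ℝ (Fin m) → ℝ, ContDiff ℝ (⊤ : ℕ∞) h ∧
      (∀ x, 0 < h x ∧ h x ≤ δ₀) ∧
      ∀ x, f (x - h x • ∇ f x) - f x ≤ -(α * h x * ‖∇ f x‖ ^ 2) := by
  have hfd : Differentiable ℝ f := hf.differentiable one_ne_zero
  -- Step 1: local step-size constants
  have hloc : ∀ x₀ : EuclideanSpace ℝ (Fin m), ∃ c, 0 < c ∧ c ≤ δ₀ ∧ ∃ U ∈ nhds x₀,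
      ∀ y ∈ U, ∀ s', 0 < s' → s' ≤ c →
        f (y - s' • ∇ f y) - f y ≤ -(α * s' * ‖∇ f y‖ ^ 2) := by
    intro x₀
    obtain ⟨K, t, ht, hK⟩ := hlip x₀
    obtain ⟨r, hr, hball⟩ := Metric.mem_nhds_iff.1 ht
    have Hlip : LipschitzOnWith K (∇ f) (Metric.ball x₀ r) := hK.mono hball
    set M : ℝ := ‖∇ f x₀‖ + K * r with hM
    have hM0 : 0 ≤ M := by positivity
    have hMb : ∀ y ∈ Metric.ball x₀ r, ‖∇ f y‖ ≤ M := by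
      intro y hy
      have h1 : ‖∇ f y - ∇ f x₀‖ ≤ K * dist y x₀ := by
        have := Hlip.dist_le_mul y hy x₀ (Metric.mem_ball_self hr)
        simpa [dist_eq_norm] using this
      have h2 : dist y x₀ ≤ r := le_of_lt (Metric.mem_ball.1 hy)
      calc ‖∇ f y‖ ≤ ‖∇ f x₀‖ + ‖∇ f y - ∇ f x₀‖ := by
            have := norm_sub_norm_le (∇ f y) (∇ f x₀); linarith
        _ ≤ ‖∇ f x₀‖ + K * dist y x₀ := by linarith
        _ ≤ ‖∇ f x₀‖ + K * r := by
            have := mul_le_mul_of_nonneg_left h2 K.coe_nonneg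
            linarith
        _ = M := rfl
    set c : ℝ := min δ₀ (min ((1 - α) / (K + 1)) (r / (2 * (M + 1)))) with hc
    have hc0 : 0 < c :=
      lt_min hδ₀ (lt_min (div_pos (by linarith) (by positivity)) (by positivity))
    have hcδ : c ≤ δ₀ := min_le_left _ _
    have hcα : c ≤ (1 - α) / (K + 1) := (min_le_right _ _).trans (min_le_left _ _)
    have hcr : c ≤ r / (2 * (M + 1)) := (min_le_right _ _).trans (min_le_right _ _)
    refine ⟨c, hc0, hcδ, Metric.ball x₀ (r / 2), Metric.ball_mem_nhds x₀ (by positivity), ?_⟩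
    intro y hy s' hs'0 hs'c
    have hyr : y ∈ Metric.ball x₀ r :=
      Metric.mem_ball.2 (lt_of_lt_of_le (Metric.mem_ball.1 hy) (by linarith))
    have hgy : ‖∇ f y‖ ≤ M := hMb y hyr
    have hcM : c * M ≤ r / 2 := by
      have h1 : c * M ≤ (r / (2 * (M + 1))) * M := mul_le_mul_of_nonneg_right hcr hM0
      have h2 : (r / (2 * (M + 1))) * M ≤ r / 2 := by
        rw [div_mul_eq_mul_div, div_le_div_iff₀ (by positivity) (by norm_num)]
        nlinarith
      linarith
    have hbr : y - s' • ∇ f y ∈ Metric.ball x₀ r := by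
      rw [Metric.mem_ball, dist_eq_norm]
      have he : y - s' • ∇ f y - x₀ = (y - x₀) - s' • ∇ f y := by abel
      rw [he]
      calc ‖(y - x₀) - s' • ∇ f y‖ ≤ ‖y - x₀‖ + ‖s' • ∇ f y‖ := norm_sub_le _ _
        _ < r / 2 + ‖s' • ∇ f y‖ := by
            have := Metric.mem_ball.1 hy
            rw [dist_eq_norm] at this
            linarith
        _ ≤ r / 2 + r / 2 := by
            have hb1 : ‖s' • ∇ f y‖ ≤ r / 2 := by
              rw [norm_smul, Real.norm_eq_abs, abs_of_pos hs'0]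
              exact le_trans (mul_le_mul hs'c hgy (norm_nonneg _) hc0.le) hcM
            linarith
        _ = r := by ring
    have hdes := descent_step f hfd (convex_ball x₀ r) Hlip hs'0.le hyr hbr
    have hKs : (K : ℝ) * s' ≤ 1 - α := by
      have h0 : s' ≤ (1 - α) / (K + 1) := hs'c.trans hcα
      have h1 : (K : ℝ) * s' ≤ K * ((1 - α) / (K + 1)) :=
        mul_le_mul_of_nonneg_left h0 K.coe_nonneg
      have h2 : (K : ℝ) * ((1 - α) / (K + 1)) ≤ 1 - α := by
        rw [mul_div_assoc', div_le_iff₀ (by positivity)]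
        nlinarith [K.coe_nonneg]
      linarith
    have hn2 : (0:ℝ) ≤ ‖∇ f y‖ ^ 2 := sq_nonneg _
    nlinarith [mul_le_mul_of_nonneg_right (mul_le_mul_of_nonneg_left hKs hs'0.le) hn2]
  choose cf hcf0 hcfδ Uf hUf hUfprop using hloc
  -- Step 2: uniform constants on closed balls, by compactness
  have hD : ∀ n : ℕ, ∃ D, 0 < D ∧ D ≤ δ₀ ∧ ∀ y, ‖y‖ ≤ (n:ℝ) + 1 → ∀ s', 0 < s' → s' ≤ D →
      f (y - s' • ∇ f y) - f y ≤ -(α * s' * ‖∇ f y‖ ^ 2) := by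
    intro n
    have hKc : IsCompact (Metric.closedBall (0 : EuclideanSpace ℝ (Fin m)) ((n:ℝ) + 1)) :=
      isCompact_closedBall _ _
    obtain ⟨t, -, hcover⟩ := hKc.elim_nhds_subcover Uf (fun x _ => hUf x)
    have h0mem : (0 : EuclideanSpace ℝ (Fin m)) ∈
        Metric.closedBall (0 : EuclideanSpace ℝ (Fin m)) ((n:ℝ) + 1) := by
      simp [Metric.mem_closedBall]
      positivity
    have hne : t.Nonempty := by
      rcases Set.mem_iUnion₂.1 (hcover h0mem) with ⟨x, hx, -⟩
      exact ⟨x, hx⟩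
    refine ⟨min δ₀ (t.inf' hne cf), lt_min hδ₀ (Finset.lt_inf'_iff hne |>.2
      (fun i _ => hcf0 i)), min_le_left _ _, ?_⟩
    intro y hy s' hs'0 hs'D
    have hymem : y ∈ Metric.closedBall (0 : EuclideanSpace ℝ (Fin m)) ((n:ℝ) + 1) := by
      simpa [Metric.mem_closedBall, dist_eq_norm] using hy
    rcases Set.mem_iUnion₂.1 (hcover hymem) with ⟨x, hx, hyx⟩
    have hs'c : s' ≤ cf x :=
      hs'D.trans ((min_le_right _ _).trans (Finset.inf'_le cf hx))
    exact hUfprop x y hyx s' hs'0 hs'c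
  choose D hD0 hDδ hDprop using hD
  -- Step 3: entire dominating function
  set γ : ℕ → ℝ := fun n => max 1 (δ₀ / D n) with hγdef
  have hγ : ∀ n, 1 ≤ γ n := fun n => le_max_left _ _
  obtain ⟨W, hWa, hWnn, hWmono, hWge⟩ := exists_entire_dominating γ hγ
  set h : EuclideanSpace ℝ (Fin m) → ℝ := fun x => δ₀ / (1 + W (‖x‖ ^ 2)) with hh
  have hW0 : ∀ x : EuclideanSpace ℝ (Fin m), 0 ≤ W (‖x‖ ^ 2) := fun x =>
    hWnn _ (sq_nonneg _)
  have hpos : ∀ x, 0 < h x := fun x => div_pos hδ₀ (by linarith [hW0 x])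
  have hle : ∀ x, h x ≤ δ₀ := by
    intro x
    rw [hh]
    rw [div_le_iff₀ (by linarith [hW0 x])]
    nlinarith [mul_nonneg hδ₀.le (hW0 x)]
  have hbound : ∀ x, h x ≤ D ⌊‖x‖⌋₊ := by
    intro x
    set n : ℕ := ⌊‖x‖⌋₊ with hn
    have h1 : (n:ℝ) ≤ ‖x‖ := Nat.floor_le (norm_nonneg x)
    have h2 : ((n:ℝ)) ^ 2 ≤ ‖x‖ ^ 2 := pow_le_pow_left₀ (Nat.cast_nonneg n) h1 2
    have h3 : γ n ≤ W (‖x‖ ^ 2) :=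
      (hWge n).trans (hWmono _ _ (sq_nonneg _) h2)
    have h4 : δ₀ / D n ≤ W (‖x‖ ^ 2) := le_trans (le_max_right _ _) h3
    rw [hh]
    rw [div_le_iff₀ (by linarith [hW0 x])]
    have h5 : D n * (δ₀ / D n) = δ₀ := by
      rw [mul_comm, div_mul_eq_mul_div, mul_div_assoc, div_self (hD0 n).ne', mul_one]
    nlinarith [hD0 n, mul_le_mul_of_nonneg_left h4 (hD0 n).le]
  refine ⟨h, ?_, fun x => ⟨hpos x, hle x⟩, ?_⟩
  · -- analyticity, hence C^⊤ smoothness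
    have hin : AnalyticOnNhd ℝ
        (fun x : EuclideanSpace ℝ (Fin m) => (⟪x, x⟫ : ℝ)) Set.univ := by
      have hb := (innerSL ℝ (E := EuclideanSpace ℝ (Fin m))).analyticOnNhd_bilinear
        (Set.univ : Set (EuclideanSpace ℝ (Fin m) × EuclideanSpace ℝ (Fin m)))
      have hd : AnalyticOnNhd ℝ
          (fun x : EuclideanSpace ℝ (Fin m) => (x, x)) Set.univ :=
        analyticOnNhd_id.prod analyticOnNhd_id
      exact hb.comp hd (Set.mapsTo_univ _ _)
    have hnorm2 : AnalyticOnNhd ℝ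
        (fun x : EuclideanSpace ℝ (Fin m) => ‖x‖ ^ 2) Set.univ := by
      have : (fun x : EuclideanSpace ℝ (Fin m) => ‖x‖ ^ 2) =
          (fun x : EuclideanSpace ℝ (Fin m) => (⟪x, x⟫ : ℝ)) := by
        funext x
        rw [real_inner_self_eq_norm_sq]
      rw [this]
      exact hin
    have hWcomp := hWa.comp hnorm2 (Set.mapsTo_univ _ _)
    have hdenom : AnalyticOnNhd ℝ
        (fun x : EuclideanSpace ℝ (Fin m) => 1 + W (‖x‖ ^ 2)) Set.univ :=
      analyticOnNhd_const.add hWcomp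
    have hha : AnalyticOnNhd ℝ h Set.univ := by
      rw [hh]
      exact analyticOnNhd_const.div hdenom (fun x _ => ne_of_gt (by linarith [hW0 x]))
    exact hha.contDiff
  · intro x
    exact hDprop ⌊‖x‖⌋₊ x (le_of_lt (by exact_mod_cast Nat.lt_floor_add_one ‖x‖))
      (h x) (hpos x) (hbound x)
end

section
/- Let f : ℝ^m → ℝ be C² and fix an exponent α > 0. For x ∈ ℝ^m with ∇f(x) ≠ 0 and δ ∈ ℝ, let A(x, δ) = ∇²f(x) + δ‖∇f(x)‖^α · Id, a self-adjoint linear operator on ℝ^m. Then there exists a set Δ ⊆ ℝ of Lebesgue measure 0 such that for every δ ∈ ℝ \ Δ, the set {x ∈ ℝ^m : ∇f(x) ≠ 0 and A(x, δ) is not invertible} has Lebesgue measure 0. -/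
open Gradient MeasureTheory

/-! For fixed `x` with `∇f(x) ≠ 0`, the operator `A(x, δ)` fails to be invertible only when
`-δ‖∇f(x)‖^α` is one of the finitely many eigenvalues of `∇²f(x)`, so for each `x` the set of bad
`δ` is null. The set of bad pairs `(x, δ)` is Borel, since `fderiv` of any function is measurable,
so by Fubini for almost every `δ` the set of bad `x` is null as well. -/

namespace ContinuousLinearMap

variable {𝕜 E : Type*} [NontriviallyNormedField 𝕜] [NormedAddCommGroup E] [NormedSpace 𝕜 E]
  [CompleteSpace E]

theorem isClosed_setOf_not_isUnit : IsClosed {H : E →L[𝕜] E | ¬IsUnit H} :=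
  Units.isOpen.isClosed_compl

variable [FiniteDimensional 𝕜 E]

theorem finite_setOf_not_isUnit_add_smul_id (H : E →L[𝕜] E) :
    {t : 𝕜 | ¬IsUnit (H + t • ContinuousLinearMap.id 𝕜 E)}.Finite := by
  have hσ := Module.End.finite_spectrum (H : Module.End 𝕜 E)
  rw [← spectrum_eq] at hσ
  refine (hσ.preimage neg_injective.injOn).subset fun t ht => ?_
  rw [Set.mem_preimage, spectrum.mem_iff, ← IsUnit.neg_iff]
  simpa [Algebra.algebraMap_eq_smul_one, add_comm, one_def] using ht

theorem finite_setOf_not_isUnit_add_mul_smul_id (H : E →L[𝕜] E) {c : 𝕜} (hc : c ≠ 0) :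
    {t : 𝕜 | ¬IsUnit (H + (t * c) • ContinuousLinearMap.id 𝕜 E)}.Finite :=
  H.finite_setOf_not_isUnit_add_smul_id.preimage (mul_left_injective₀ hc).injOn

end ContinuousLinearMap

theorem measurable_gradient {E : Type*} [NormedAddCommGroup E] [InnerProductSpace ℝ E]
    [FiniteDimensional ℝ E] [MeasurableSpace E] [BorelSpace E] (f : E → ℝ) :
    Measurable (∇ f) :=
  (InnerProductSpace.toDual ℝ E).symm.continuous.measurable.comp (measurable_fderiv ℝ f)

theorem newQNewton_perturbation_generically_invertible_general
    {m : ℕ} (f : EuclideanSpace ℝ (Fin m) → ℝ)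
    (α : ℝ)
    (A : EuclideanSpace ℝ (Fin m) → ℝ →
      (EuclideanSpace ℝ (Fin m) →L[ℝ] EuclideanSpace ℝ (Fin m)))
    (hA : ∀ x δ, A x δ = fderiv ℝ (fun y => ∇ f y) x +
      (δ * ‖∇ f x‖ ^ α) • ContinuousLinearMap.id ℝ (EuclideanSpace ℝ (Fin m))) :
    ∃ Δ : Set ℝ, MeasureTheory.volume Δ = 0 ∧
      ∀ δ ∉ Δ, MeasureTheory.volume
        {x : EuclideanSpace ℝ (Fin m) | ∇ f x ≠ 0 ∧ ¬ IsUnit (A x δ)} = 0 := by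
  set bad : EuclideanSpace ℝ (Fin m) → ℝ → Prop := fun x δ => ∇ f x ≠ 0 ∧ ¬IsUnit (A x δ)
  have hA_meas : Measurable fun q : EuclideanSpace ℝ (Fin m) × ℝ => A q.1 q.2 := by
    simp only [hA]
    have hgrad := measurable_gradient f
    fun_prop
  have hbad_meas : MeasurableSet {q : EuclideanSpace ℝ (Fin m) × ℝ | ¬bad q.1 q.2} :=
    (((measurable_gradient f).comp measurable_fst (measurableSet_singleton 0).compl).inter
      (hA_meas ContinuousLinearMap.isClosed_setOf_not_isUnit.measurableSet)).compl
  have hbad_finite (x) : {δ | bad x δ}.Finite := by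
    by_cases hx : ∇ f x = 0
    · simp [bad, hx]
    · refine ((fderiv ℝ (fun y => ∇ f y) x).finite_setOf_not_isUnit_add_mul_smul_id
        (Real.rpow_pos_of_pos (norm_pos_iff.2 hx) α).ne').subset fun δ hδ => ?_
      simpa [← hA] using hδ.2
  have hae : ∀ᵐ δ, ∀ᵐ x, ¬bad x δ :=
    (Measure.ae_ae_comm hbad_meas).1 <|
      ae_of_all _ fun x => (hbad_finite x).countable.ae_notMem volume
  exact ⟨{δ | ¬∀ᵐ x, ¬bad x δ}, ae_iff.1 hae,
    fun δ hδ => by simpa [bad] using ae_iff.1 (not_not.1 hδ)⟩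

/-- Let `f : ℝ^m → ℝ` be `C²` and `α > 0`. For `x` with `∇f(x) ≠ 0` and
`δ ∈ ℝ` let `A(x, δ) = ∇²f(x) + δ‖∇f(x)‖^α · Id`. Then there is a Lebesgue-null set `Δ ⊆ ℝ`
such that for every `δ ∉ Δ`, the set of `x` with `∇f(x) ≠ 0` and `A(x, δ)` not invertible is
Lebesgue-null. -/
theorem newQNewton_perturbation_generically_invertible
    {m : ℕ} (f : EuclideanSpace ℝ (Fin m) → ℝ) (hf : ContDiff ℝ 2 f)
    (α : ℝ) (hα : 0 < α)
    (A : EuclideanSpace ℝ (Fin m) → ℝ →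
      (EuclideanSpace ℝ (Fin m) →L[ℝ] EuclideanSpace ℝ (Fin m)))
    (hA : ∀ x δ, A x δ = fderiv ℝ (fun y => ∇ f y) x +
      (δ * ‖∇ f x‖ ^ α) • ContinuousLinearMap.id ℝ (EuclideanSpace ℝ (Fin m))) :
    ∃ Δ : Set ℝ, MeasureTheory.volume Δ = 0 ∧
      ∀ δ ∉ Δ, MeasureTheory.volume
        {x : EuclideanSpace ℝ (Fin m) | ∇ f x ≠ 0 ∧ ¬ IsUnit (A x δ)} = 0 :=
  newQNewton_perturbation_generically_invertible_general f α A hA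
end

section
/- Let Ω ⊊ ℝ^m be a nonempty proper open subset, r(x) = dist(x, ℝ^m \ Ω), and f : Ω → ℝ a C² function. Fix α > 1, pairwise distinct real numbers δ_0, …, δ_m, and a strictly increasing sequence (γ_j)_{j≥0} with γ_0 = 0, γ_1 = 1, γ_j → ∞ and liminf_{j→∞} γ_j/γ_{j+1} > 0. Let (x_n) be a sequence in Ω with ∇f(x_n) ≠ 0 for all n, constructed by the New Q-Newton update: A_n = ∇²f(x_n) + δ_{j_n}‖∇f(x_n)‖^α · Id where j_n is the smallest index in {0,…,m} making A_n invertible (such an index exists); v_n = |A_n|⁻¹ ∇f(x_n); λ_n = 1/γ_{j+1} for the unique j with γ_j r(x_n)/2 ≤ ‖v_n‖ < γ_{j+1} r(x_n)/2; and x_{n+1} = x_n − λ_n v_n (which lies in Ω since λ_n‖v_n‖ < r(x_n)/2). If (x_n) converges to a point x_∞ ∈ Ω, then ∇f(x_∞) = 0. -/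
/-!
If `∇f(xlim) ≠ 0`, continuity of the gradient and the Hessian at `xlim` bounds the operators
`A n` uniformly, and since `|A n|` has norm at most `‖A n‖`, the directions `v n = |A n|⁻¹ ∇f(x n)`
stay bounded away from `0`. The step `λ n ‖v n‖` is then either `‖v n‖ / γ 1` (for `jj = 0`) or at
least `(γ jj / γ (jj + 1)) · r(x n) / 2`; the first is bounded below by the previous remark, the
second because `r(x n) → r(xlim) > 0` and the ratios `γ jj / γ (jj + 1)` have positive liminf.
So the steps of the convergent sequence `x` do not tend to `0`, which is absurd.
-/

open Gradient RealInnerProductSpace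

/-- `AbsInvApply A g w` says that `w = |A|⁻¹ g`, where `|A|` is the unique symmetric
positive-definite square root `P` of `A²` (for `A` an invertible symmetric operator);
equivalently `|A|⁻¹ g = pr₊(A⁻¹g) − pr₋(A⁻¹g)` with `pr₊, pr₋` the orthogonal projections
onto the sums of positive, resp. negative, eigenspaces of `A`. -/
def AbsInvApply {E : Type*} [NormedAddCommGroup E] [InnerProductSpace ℝ E]
    (A : E →L[ℝ] E) (g w : E) : Prop :=
  ∃ P : E →L[ℝ] E, (∀ u u' : E, ⟪P u, u'⟫ = ⟪u, P u'⟫) ∧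
    (∀ u : E, u ≠ 0 → 0 < ⟪P u, u⟫) ∧ P.comp P = A.comp A ∧ P w = g

open Filter Topology

theorem ContDiffOn.gradient_of_isOpen {E : Type*} [NormedAddCommGroup E] [InnerProductSpace ℝ E]
    [CompleteSpace E] {f : E → ℝ} {s : Set E} {n : WithTop ℕ∞} (hf : ContDiffOn ℝ (n + 1) f s)
    (hs : IsOpen s) : ContDiffOn ℝ n (∇ f) s :=
  (InnerProductSpace.toDual ℝ E).symm.contDiff.comp_contDiffOn (hf.fderiv_of_isOpen hs le_rfl)

theorem ContinuousLinearMap.norm_le_of_comp_self_eq {E : Type*} [NormedAddCommGroup E]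
    [InnerProductSpace ℝ E] [CompleteSpace E] {P A : E →L[ℝ] E} (hP : IsSelfAdjoint P)
    (hPA : P ∘L P = A ∘L A) : ‖P‖ ≤ ‖A‖ := by
  have hP_sq : ‖P ∘L P‖ = ‖P‖ * ‖P‖ := by
    simpa [hP.adjoint_eq] using P.norm_adjoint_comp_self
  have hA_sq : ‖A ∘L A‖ ≤ ‖A‖ * ‖A‖ := A.opNorm_comp_le A
  exact mul_self_le_mul_self_iff (norm_nonneg _) (norm_nonneg _) |>.mpr (hP_sq ▸ hPA ▸ hA_sq)

theorem AbsInvApply.norm_le_mul {E : Type*} [NormedAddCommGroup E] [InnerProductSpace ℝ E]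
    [CompleteSpace E] {A : E →L[ℝ] E} {g w : E} (h : AbsInvApply A g w) : ‖g‖ ≤ ‖A‖ * ‖w‖ := by
  obtain ⟨P, hP_symm, -, hPA, rfl⟩ := h
  have hP : IsSelfAdjoint P := ContinuousLinearMap.isSelfAdjoint_iff_isSymmetric.mpr hP_symm
  exact (P.le_opNorm w).trans <|
    mul_le_mul_of_nonneg_right (ContinuousLinearMap.norm_le_of_comp_self_eq hP hPA) (norm_nonneg w)

theorem ContinuousLinearMap.norm_add_smul_id_le {E : Type*} [NormedAddCommGroup E]
    [NormedSpace ℝ E] (H : E →L[ℝ] E) (c : ℝ) : ‖H + c • ContinuousLinearMap.id ℝ E‖ ≤ ‖H‖ + |c| :=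
  calc ‖H + c • ContinuousLinearMap.id ℝ E‖ ≤ ‖H‖ + ‖c • ContinuousLinearMap.id ℝ E‖ :=
        norm_add_le _ _
    _ ≤ ‖H‖ + |c| := by
        gcongr
        exact (ContinuousLinearMap.opNorm_smul_le _ _).trans <|
          mul_le_of_le_one_right (abs_nonneg c) ContinuousLinearMap.norm_id_le

theorem exists_pos_eventually_le_of_le_mul {ι : Type*} {l : Filter ι} {p a q : ι → ℝ} {P B : ℝ}
    (hp : Tendsto p l (𝓝 P)) (hP : 0 < P) (ha : Tendsto a l (𝓝 B)) (hq : ∀ i, 0 ≤ q i)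
    (hpaq : ∀ i, p i ≤ a i * q i) : ∃ c > 0, ∀ᶠ i in l, c ≤ q i := by
  set M := max B 0 + 1
  have hM : 0 < M := by positivity
  refine ⟨P / 2 / M, by positivity, ?_⟩
  filter_upwards [hp.eventually_const_lt (half_lt_self hP),
    ha.eventually_lt_const (lt_of_le_of_lt (le_max_left B 0) (lt_add_one _))] with i hpi hai
  rw [div_le_iff₀ hM]
  nlinarith [hpaq i, hq i]

theorem exists_pos_eventually_le_norm_absInvApply {E : Type*} [NormedAddCommGroup E]
    [InnerProductSpace ℝ E] [CompleteSpace E] {Ω : Set E} (hΩ : IsOpen Ω) {f : E → ℝ}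
    (hf : ContDiffOn ℝ 2 f Ω) {x : ℕ → E} {xlim : E} (hconv : Tendsto x atTop (𝓝 xlim))
    (hxlim : xlim ∈ Ω) (hg : ∇ f xlim ≠ 0) {α D : ℝ} {δ : ℕ → ℝ} (hδ : ∀ n, |δ n| ≤ D)
    {A : ℕ → E →L[ℝ] E}
    (hA : ∀ n, A n = fderiv ℝ (∇ f) (x n) +
      (δ n * ‖∇ f (x n)‖ ^ α) • ContinuousLinearMap.id ℝ E)
    {v : ℕ → E} (hv : ∀ n, AbsInvApply (A n) (∇ f (x n)) (v n)) :
    ∃ c > 0, ∀ᶠ n in atTop, c ≤ ‖v n‖ := by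
  have hΩx : Ω ∈ 𝓝 xlim := hΩ.mem_nhds hxlim
  have hgrad : ContDiffOn ℝ 1 (∇ f) Ω := hf.gradient_of_isOpen hΩ
  have hgx : Tendsto (fun n => ‖∇ f (x n)‖) atTop (𝓝 ‖∇ f xlim‖) :=
    ((hgrad.continuousOn.continuousAt hΩx).tendsto.comp hconv).norm
  have hHx : Tendsto (fun n => ‖fderiv ℝ (∇ f) (x n)‖) atTop (𝓝 ‖fderiv ℝ (∇ f) xlim‖) :=
    (((hgrad.continuousOn_fderiv_of_isOpen hΩ le_rfl).continuousAt hΩx).tendsto.comp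
      hconv).norm
  have hA_le : ∀ n, ‖A n‖ ≤ ‖fderiv ℝ (∇ f) (x n)‖ + D * ‖∇ f (x n)‖ ^ α := fun n => by
    refine (hA n ▸ ContinuousLinearMap.norm_add_smul_id_le _ _).trans ?_
    rw [abs_mul, abs_of_nonneg (Real.rpow_nonneg (norm_nonneg _) α)]
    gcongr
    exact hδ n
  exact exists_pos_eventually_le_of_le_mul hgx (norm_pos_iff.mpr hg)
    (hHx.add (tendsto_const_nhds.mul (hgx.rpow_const (.inl (norm_ne_zero_iff.mpr hg)))))
    (fun n => norm_nonneg (v n))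
    (fun n => (hv n).norm_le_mul.trans (mul_le_mul_of_nonneg_right (hA_le n) (norm_nonneg _)))

theorem exists_pos_eventually_le_infDist {ι E : Type*} [PseudoMetricSpace E] {l : Filter ι}
    {s : Set E} (hs : IsClosed s) (hne : s.Nonempty) {x : ι → E} {a : E}
    (hx : Tendsto x l (𝓝 a)) (ha : a ∉ s) : ∃ ρ > 0, ∀ᶠ i in l, ρ ≤ Metric.infDist (x i) s := by
  have hpos : 0 < Metric.infDist a s := (hs.notMem_iff_infDist_pos hne).mp ha
  exact ⟨_, half_pos hpos, (((Metric.continuous_infDist_pt s).tendsto a).comp hx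
    |>.eventually_const_lt (half_lt_self hpos)).mono fun _ => le_of_lt⟩

theorem exists_pos_forall_le_of_liminf_pos {u : ℕ → ℝ} (hu : ∀ k, 0 < u k)
    (h : 0 < liminf u atTop) : ∃ ε > 0, ∀ k, ε ≤ u k := by
  have hbdd : IsBoundedUnder (· ≥ ·) atTop u := isBoundedUnder_of ⟨0, fun k => (hu k).le⟩
  obtain ⟨N, hN⟩ := eventually_atTop.mp <| eventually_lt_of_lt_liminf (half_lt_self h) hbdd
  have hne : (Finset.range (N + 1)).Nonempty := Finset.nonempty_range_add_one
  refine ⟨min (liminf u atTop / 2) ((Finset.range (N + 1)).inf' hne u),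
    lt_min (half_pos h) ((Finset.lt_inf'_iff hne).mpr fun k _ => hu k), fun k => ?_⟩
  rcases le_total k N with hk | hk
  · exact (min_le_right _ _).trans (Finset.inf'_le _ (Finset.mem_range_succ_iff.mpr hk))
  · exact (min_le_left _ _).trans (hN k hk).le

theorem exists_pos_forall_le_ratio_of_liminf_pos {γ : ℕ → ℝ} (hγ : StrictMono γ) (hγ0 : γ 0 = 0)
    (hratio : 0 < liminf (fun k => γ k / γ (k + 1)) atTop) :
    ∃ ε > 0, ∀ k, ε ≤ γ (k + 1) / γ (k + 2) := by
  have hpos : ∀ k, 0 < γ (k + 1) := fun k => hγ0 ▸ hγ k.succ_pos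
  refine exists_pos_forall_le_of_liminf_pos (fun k => div_pos (hpos k) (hpos (k + 1))) ?_
  simpa only [liminf_nat_add (fun k => γ k / γ (k + 1)) 1] using hratio

theorem min_le_norm_smul_of_mul_le {E : Type*} [NormedAddCommGroup E] [NormedSpace ℝ E]
    {γ : ℕ → ℝ} (hγ : StrictMono γ) (hγ0 : γ 0 = 0) {ε : ℝ}
    (hε : ∀ k, ε ≤ γ (k + 1) / γ (k + 2)) {c ρ₀ ρ lam : ℝ} {v : E} {k : ℕ} (hρ₀ : 0 ≤ ρ₀)
    (hc : c ≤ ‖v‖) (hρ : ρ₀ ≤ ρ) (hk : γ k * ρ / 2 ≤ ‖v‖) (hlam : lam = 1 / γ (k + 1)) :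
    min (c / γ 1) (ε * ρ₀ / 2) ≤ ‖lam • v‖ := by
  have hpos : ∀ i, 0 < γ (i + 1) := fun i => hγ0 ▸ hγ i.succ_pos
  rw [hlam, norm_smul, norm_div, norm_one, Real.norm_of_nonneg (hpos k).le, one_div_mul_eq_div]
  rcases k with _ | i
  · exact (min_le_left _ _).trans (div_le_div_of_nonneg_right hc (hpos 0).le)
  · calc min (c / γ 1) (ε * ρ₀ / 2) ≤ ε * ρ₀ / 2 := min_le_right _ _
      _ ≤ γ (i + 1) / γ (i + 2) * ρ / 2 := by
        gcongr
        exacts [div_nonneg (hpos _).le (hpos _).le, hε i]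
      _ = γ (i + 1) * ρ / 2 / γ (i + 2) := by ring
      _ ≤ ‖v‖ / γ (i + 2) := div_le_div_of_nonneg_right hk (hpos _).le

theorem Filter.Tendsto.eventually_norm_sub_succ_lt {E : Type*} [NormedAddCommGroup E]
    {x : ℕ → E} {a : E} (hx : Tendsto x atTop (𝓝 a)) {s : ℝ} (hs : 0 < s) :
    ∀ᶠ n in atTop, ‖x (n + 1) - x n‖ < s := by
  have h : Tendsto (fun n => x (n + 1) - x n) atTop (𝓝 0) := by
    simpa using ((tendsto_add_atTop_iff_nat 1).mpr hx).sub hx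
  simpa using h.norm.eventually_lt_const (by simpa using hs)

theorem riemannian_newQNewton_limit_is_critical_general
    {m : ℕ} (Ω : Set (EuclideanSpace ℝ (Fin m))) (hΩopen : IsOpen Ω)
    (hΩproper : Ω ≠ Set.univ)
    (r : EuclideanSpace ℝ (Fin m) → ℝ) (hr : ∀ y, r y = Metric.infDist y Ωᶜ)
    (f : EuclideanSpace ℝ (Fin m) → ℝ) (hf : ContDiffOn ℝ 2 f Ω)
    (α : ℝ)
    (δs : Fin (m + 1) → ℝ)
    (γ : ℕ → ℝ) (hγmono : StrictMono γ) (hγ0 : γ 0 = 0)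
    (hγratio : 0 < Filter.liminf (fun j => γ j / γ (j + 1)) Filter.atTop)
    (x : ℕ → EuclideanSpace ℝ (Fin m))
    (A : ℕ → (EuclideanSpace ℝ (Fin m) →L[ℝ] EuclideanSpace ℝ (Fin m)))
    (j : ℕ → Fin (m + 1))
    (hA : ∀ n, A n = fderiv ℝ (fun y => ∇ f y) (x n) +
      (δs (j n) * ‖∇ f (x n)‖ ^ α) • ContinuousLinearMap.id ℝ (EuclideanSpace ℝ (Fin m)))
    (v : ℕ → EuclideanSpace ℝ (Fin m)) (hv : ∀ n, AbsInvApply (A n) (∇ f (x n)) (v n))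
    (lam : ℕ → ℝ)
    (hlam : ∀ n, ∃ jj : ℕ, γ jj * r (x n) / 2 ≤ ‖v n‖ ∧ ‖v n‖ < γ (jj + 1) * r (x n) / 2 ∧
      lam n = 1 / γ (jj + 1))
    (hupd : ∀ n, x (n + 1) = x n - lam n • v n)
    (xlim : EuclideanSpace ℝ (Fin m)) (hconv : Filter.Tendsto x Filter.atTop (nhds xlim))
    (hxlim : xlim ∈ Ω) :
    ∇ f xlim = 0 := by
  by_contra hg
  obtain ⟨D, hD⟩ := Finite.exists_le fun i => |δs i|
  obtain ⟨c, hc, hvc⟩ :=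
    exists_pos_eventually_le_norm_absInvApply hΩopen hf hconv hxlim hg (fun n => hD (j n)) hA hv
  obtain ⟨ρ, hρ, hrx⟩ := exists_pos_eventually_le_infDist hΩopen.isClosed_compl
    (Set.nonempty_compl.mpr hΩproper) hconv (not_not_intro hxlim)
  obtain ⟨ε, hε, hεγ⟩ := exists_pos_forall_le_ratio_of_liminf_pos hγmono hγ0 hγratio
  have hs : 0 < min (c / γ 1) (ε * ρ / 2) :=
    lt_min (div_pos hc (hγ0 ▸ hγmono zero_lt_one)) (by positivity)
  have hstep : ∀ᶠ n in atTop, min (c / γ 1) (ε * ρ / 2) ≤ ‖x (n + 1) - x n‖ := by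
    filter_upwards [hvc, hrx] with n hvn hrn
    obtain ⟨jj, hjj, -, hlam_eq⟩ := hlam n
    rw [hupd n, sub_sub_cancel_left, norm_neg]
    exact min_le_norm_smul_of_mul_le hγmono hγ0 hεγ hρ.le hvn (hr (x n) ▸ hrn) hjj hlam_eq
  obtain ⟨n, hbig, hsmall⟩ := (hstep.and (hconv.eventually_norm_sub_succ_lt hs)).exists
  exact hbig.not_gt hsmall

/-- Let `Ω ⊊ ℝ^m` be a nonempty proper open set, `r x = dist(x, Ωᶜ)`, and
`f` a `C²` function on `Ω`. For the Riemannian New Q-Newton iteration on `Ω` (with `α > 1`,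
pairwise distinct `δ_0, …, δ_m`, and a scaling sequence `γ` as in the definition), if the
iterates `x n ∈ Ω` (all with `∇f(x n) ≠ 0`) converge to a point `xlim ∈ Ω`, then
`∇f(xlim) = 0`. -/
theorem riemannian_newQNewton_limit_is_critical
    {m : ℕ} (Ω : Set (EuclideanSpace ℝ (Fin m))) (hΩopen : IsOpen Ω)
    (hΩne : Ω.Nonempty) (hΩproper : Ω ≠ Set.univ)
    (r : EuclideanSpace ℝ (Fin m) → ℝ) (hr : ∀ y, r y = Metric.infDist y Ωᶜ)
    (f : EuclideanSpace ℝ (Fin m) → ℝ) (hf : ContDiffOn ℝ 2 f Ω)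
    (α : ℝ) (hα : 1 < α)
    (δs : Fin (m + 1) → ℝ) (hδs : Function.Injective δs)
    (γ : ℕ → ℝ) (hγmono : StrictMono γ) (hγ0 : γ 0 = 0) (hγ1 : γ 1 = 1)
    (hγtop : Filter.Tendsto γ Filter.atTop Filter.atTop)
    (hγratio : 0 < Filter.liminf (fun j => γ j / γ (j + 1)) Filter.atTop)
    (x : ℕ → EuclideanSpace ℝ (Fin m)) (hmem : ∀ n, x n ∈ Ω)
    (hgrad0 : ∀ n, ∇ f (x n) ≠ 0)
    (A : ℕ → (EuclideanSpace ℝ (Fin m) →L[ℝ] EuclideanSpace ℝ (Fin m)))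
    (j : ℕ → Fin (m + 1))
    (hA : ∀ n, A n = fderiv ℝ (fun y => ∇ f y) (x n) +
      (δs (j n) * ‖∇ f (x n)‖ ^ α) • ContinuousLinearMap.id ℝ (EuclideanSpace ℝ (Fin m)))
    (hAinv : ∀ n, IsUnit (A n))
    (hAmin : ∀ n, ∀ i : Fin (m + 1), i < j n →
      ¬ IsUnit (fderiv ℝ (fun y => ∇ f y) (x n) +
        (δs i * ‖∇ f (x n)‖ ^ α) • ContinuousLinearMap.id ℝ (EuclideanSpace ℝ (Fin m))))
    (v : ℕ → EuclideanSpace ℝ (Fin m)) (hv : ∀ n, AbsInvApply (A n) (∇ f (x n)) (v n))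
    (lam : ℕ → ℝ)
    (hlam : ∀ n, ∃ jj : ℕ, γ jj * r (x n) / 2 ≤ ‖v n‖ ∧ ‖v n‖ < γ (jj + 1) * r (x n) / 2 ∧
      lam n = 1 / γ (jj + 1))
    (hupd : ∀ n, x (n + 1) = x n - lam n • v n)
    (xlim : EuclideanSpace ℝ (Fin m)) (hconv : Filter.Tendsto x Filter.atTop (nhds xlim))
    (hxlim : xlim ∈ Ω) :
    ∇ f xlim = 0 :=
  riemannian_newQNewton_limit_is_critical_general Ω hΩopen hΩproper r hr f hf α δs γ hγmono hγ0
    hγratio x A j hA v hv lam hlam hupd xlim hconv hxlim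
end

section
/- Let f : ℝ^m → ℝ be C³, fix α > 1 and pairwise distinct real numbers δ_0, …, δ_m, and consider the (Euclidean) New Q-Newton iteration: if ∇f(x_n) = 0 set x_{n+1} = x_n; otherwise set A_n = ∇²f(x_n) + δ_{j_n}‖∇f(x_n)‖^α · Id where j_n is the smallest index in {0,…,m} making A_n invertible, and x_{n+1} = x_n − |A_n|⁻¹ ∇f(x_n). Let z be a point with ∇f(z) = 0 and ∇²f(z) positive definite (a non-degenerate local minimum). Then there exist ε > 0 and C > 0 such that for every initial point x₀ with ‖x₀ − z‖ < ε, the sequence (x_n) converges to z and the rate of convergence is quadratic: ‖x_{n+1} − z‖ ≤ C‖x_n − z‖² for all n. -/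
open Gradient RealInnerProductSpace

/-- `(x n)` is a (Euclidean) New Q-Newton iteration sequence for `f` with exponent `α` and
perturbation parameters `δs 0, …, δs m`: if `∇f(x n) = 0` then `x (n+1) = x n`; otherwise
`x (n+1) = x n − |A n|⁻¹ ∇f(x n)` with
`A n = ∇²f(x n) + δs (j n) ‖∇f(x n)‖^α · Id`, `j n` the smallest index making `A n`
invertible. -/
def NewQNewtonSeq {m : ℕ} (f : EuclideanSpace ℝ (Fin m) → ℝ) (α : ℝ)
    (δs : Fin (m + 1) → ℝ) (x : ℕ → EuclideanSpace ℝ (Fin m)) : Prop :=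
  ∀ n : ℕ,
    (∇ f (x n) = 0 → x (n + 1) = x n) ∧
    (∇ f (x n) ≠ 0 → ∃ (j : Fin (m + 1)) (w : EuclideanSpace ℝ (Fin m)),
      IsUnit (fderiv ℝ (fun y => ∇ f y) (x n) +
        (δs j * ‖∇ f (x n)‖ ^ α) • ContinuousLinearMap.id ℝ (EuclideanSpace ℝ (Fin m))) ∧
      (∀ i : Fin (m + 1), i < j →
        ¬ IsUnit (fderiv ℝ (fun y => ∇ f y) (x n) +
          (δs i * ‖∇ f (x n)‖ ^ α) •
            ContinuousLinearMap.id ℝ (EuclideanSpace ℝ (Fin m)))) ∧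
      AbsInvApply (fderiv ℝ (fun y => ∇ f y) (x n) +
        (δs j * ‖∇ f (x n)‖ ^ α) • ContinuousLinearMap.id ℝ (EuclideanSpace ℝ (Fin m)))
        (∇ f (x n)) w ∧
      x (n + 1) = x n - w)

open Filter Topology Asymptotics Metric

/-!
Near a non-degenerate minimum `z` the perturbation `δ_j ‖∇f(x)‖^α` tends to `0`, so the
perturbed Hessian `A = ∇²f(x) + δ_j ‖∇f(x)‖^α • Id` stays uniformly coercive; then `|A| = A`
and the step `w` solves `A w = ∇f(x)`. Hence
`A (x - z - w) = (∇²f(x) (x - z) - ∇f(x)) + δ_j ‖∇f(x)‖^α (x - z)`, where the first term is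
`O(‖x - z‖²)` by Taylor's formula and the second is `O(‖x - z‖²)` because `α ≥ 1` and
`‖∇f(x)‖ = O(‖x - z‖)`. Coercivity turns this into `‖x_{n+1} - z‖ = O(‖x_n - z‖²)`, and a
quadratic estimate near `z` forces geometric, hence actual, convergence.
-/

section Coercive

variable {E : Type*} [NormedAddCommGroup E] [InnerProductSpace ℝ E]

theorem mul_norm_le_norm_apply_of_le_inner {T : E →L[ℝ] E} {c : ℝ}
    (hT : ∀ u, c * ‖u‖ ^ 2 ≤ ⟪T u, u⟫) (u : E) : c * ‖u‖ ≤ ‖T u‖ := by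
  rcases eq_or_ne u 0 with rfl | hu
  · simp
  have hu : 0 < ‖u‖ := norm_pos_iff.mpr hu
  have : c * ‖u‖ * ‖u‖ ≤ ‖T u‖ * ‖u‖ := by
    nlinarith [hT u, real_inner_le_norm (T u) u]
  exact le_of_mul_le_mul_right this hu

theorem le_inner_add_of_norm_le {T S : E →L[ℝ] E} {c : ℝ}
    (hT : ∀ u, c * ‖u‖ ^ 2 ≤ ⟪T u, u⟫) (hS : ‖S‖ ≤ c / 2) (u : E) :
    c / 2 * ‖u‖ ^ 2 ≤ ⟪(T + S) u, u⟫ := by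
  have hSu : -(c / 2 * ‖u‖ ^ 2) ≤ ⟪S u, u⟫ := by
    calc -(c / 2 * ‖u‖ ^ 2) ≤ -(‖S‖ * ‖u‖ * ‖u‖) := by
          nlinarith [mul_le_mul_of_nonneg_right hS (sq_nonneg ‖u‖)]
      _ ≤ -(‖S u‖ * ‖u‖) := by gcongr; exact S.le_opNorm u
      _ ≤ ⟪S u, u⟫ := by linarith [abs_real_inner_le_norm (S u) u, neg_abs_le ⟪S u, u⟫]
  rw [add_apply, inner_add_left]
  linarith [hT u]

theorem mul_norm_sub_le_of_le_inner {H : E →L[ℝ] E} {s c : ℝ} {d w y : E}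
    (hcoer : ∀ u, c * ‖u‖ ^ 2 ≤ ⟪(H + s • ContinuousLinearMap.id ℝ E) u, u⟫)
    (hw : (H + s • ContinuousLinearMap.id ℝ E) w = y) :
    c * ‖d - w‖ ≤ ‖y - H d‖ + |s| * ‖d‖ := by
  have hA : (H + s • ContinuousLinearMap.id ℝ E) (d - w) = -(y - H d) + s • d := by
    rw [map_sub, hw]
    simp only [add_apply, smul_apply, ContinuousLinearMap.id_apply]
    abel
  calc c * ‖d - w‖ ≤ ‖(H + s • ContinuousLinearMap.id ℝ E) (d - w)‖ :=
        mul_norm_le_norm_apply_of_le_inner hcoer _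
    _ ≤ ‖y - H d‖ + |s| * ‖d‖ := by
        rw [hA, ← norm_neg (y - H d), ← Real.norm_eq_abs, ← norm_smul]
        exact norm_add_le _ _

variable [FiniteDimensional ℝ E]

theorem exists_pos_mul_sq_le_inner {T : E →L[ℝ] E} (hT : ∀ u, u ≠ 0 → 0 < ⟪T u, u⟫) :
    ∃ c > 0, ∀ u, c * ‖u‖ ^ 2 ≤ ⟪T u, u⟫ := by
  rcases subsingleton_or_nontrivial E with _ | _
  · exact ⟨1, one_pos, fun u => by simp [Subsingleton.elim u 0]⟩
  have hcont : Continuous fun u : E => ⟪T u, u⟫ := by fun_prop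
  obtain ⟨v, hv, hmin⟩ := (isCompact_sphere (0 : E) 1).exists_isMinOn
    (NormedSpace.sphere_nonempty.mpr zero_le_one) hcont.continuousOn
  have hv1 : ‖v‖ = 1 := by simpa using hv
  refine ⟨⟪T v, v⟫, hT v (by rintro rfl; simp at hv1), fun u => ?_⟩
  rcases eq_or_ne u 0 with rfl | hu
  · simp
  have hu : 0 < ‖u‖ := norm_pos_iff.mpr hu
  have hmem : ‖u‖⁻¹ • u ∈ sphere (0 : E) 1 := by
    simp [norm_smul, inv_mul_cancel₀ hu.ne']
  have hscale : ⟪T (‖u‖⁻¹ • u), ‖u‖⁻¹ • u⟫ = ⟪T u, u⟫ / ‖u‖ ^ 2 := by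
    rw [map_smul, real_inner_smul_left, real_inner_smul_right]
    field_simp
  have := hmin hmem
  simp only [Set.mem_ofPred_eq, hscale] at this
  rwa [le_div_iff₀ (by positivity)] at this

theorem eq_of_comp_self_eq_of_inner_pos {P A : E →L[ℝ] E}
    (hP : (P : E →ₗ[ℝ] E).IsSymmetric) (hPpos : ∀ u, u ≠ 0 → 0 < ⟪P u, u⟫)
    (hA : (A : E →ₗ[ℝ] E).IsSymmetric) (hApos : ∀ u, u ≠ 0 → 0 < ⟪A u, u⟫)
    (h : P.comp P = A.comp A) : P = A := by
  set S : E →ₗ[ℝ] E := (P : E →ₗ[ℝ] E) - A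
  have hS : S.IsSymmetric := hP.sub hA
  -- `P² - A² = P S + S A`, so on an eigenvector `v` of `S` with eigenvalue `μ` the form
  -- `⟪(P S + S A) v, v⟫ = μ (⟪P v, v⟫ + ⟪A v, v⟫)` vanishes, forcing `μ = 0`.
  have hker : ∀ (v : E) (μ : ℝ), S v = μ • v → v ≠ 0 → S v = 0 := by
    intro v μ hv hv0
    have hsum : P (S v) + S (A v) = 0 := by
      have := congrArg (fun T : E →L[ℝ] E => T v) h
      simp only [ContinuousLinearMap.comp_apply] at this
      simp only [S, LinearMap.sub_apply, ContinuousLinearMap.coe_coe, map_sub, this]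
      abel
    have : μ * (⟪P v, v⟫ + ⟪A v, v⟫) = 0 := by
      have h0 := congrArg (fun u => ⟪u, v⟫) hsum
      simp only [inner_add_left, inner_zero_left] at h0
      rw [hS (A v) v, hv, map_smul, real_inner_smul_left, real_inner_smul_right] at h0
      linarith
    have hμ : μ = 0 := by
      rcases mul_eq_zero.mp this with hμ | h
      · exact hμ
      · linarith [hPpos v hv0, hApos v hv0]
    rw [hv, hμ, zero_smul]
  let b := hS.eigenvectorBasis (n := Module.finrank ℝ E) rfl
  have hS0 : S = 0 := b.toBasis.ext fun i => by
    rw [LinearMap.zero_apply, b.coe_toBasis]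
    exact hker _ _ (hS.apply_eigenvectorBasis rfl i) (b.toBasis.ne_zero i)
  exact ContinuousLinearMap.coe_injective (sub_eq_zero.mp hS0)

theorem AbsInvApply.apply_eq {A : E →L[ℝ] E} {g w : E} (h : AbsInvApply A g w)
    (hA : (A : E →ₗ[ℝ] E).IsSymmetric) (hApos : ∀ u, u ≠ 0 → 0 < ⟪A u, u⟫) : A w = g := by
  obtain ⟨P, hP, hPpos, hPA, hPw⟩ := h
  rwa [← eq_of_comp_self_eq_of_inner_pos hP hPpos hA hApos hPA]

end Coercive

section Taylor

variable {E F : Type*} [NormedAddCommGroup E] [NormedSpace ℝ E] [NormedAddCommGroup F]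
  [NormedSpace ℝ F]

theorem ContDiffAt.isBigO_sub_sub_fderiv_apply {g : E → F} {z : E} (hg : ContDiffAt ℝ 2 g z) :
    (fun x => g x - g z - fderiv ℝ g x (x - z)) =O[𝓝 z] fun x => ‖x - z‖ ^ 2 := by
  obtain ⟨K, t, ht, hK⟩ := (hg.fderiv_right (m := 1) le_rfl).exists_lipschitzOnWith
  have hdiff : ∀ᶠ x in 𝓝 z, DifferentiableAt ℝ g x :=
    (hg.eventually (by simp)).mono fun x hx => hx.differentiableAt (by norm_num)
  obtain ⟨r, hr, hball⟩ := Metric.mem_nhds_iff.mp (inter_mem ht hdiff)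
  refine IsBigO.of_bound K ?_
  filter_upwards [ball_mem_nhds z hr] with x hx
  have hseg : segment ℝ x z ⊆ ball z r := (convex_ball z r).segment_subset hx (mem_ball_self hr)
  have hbound : ∀ y ∈ segment ℝ x z, ‖fderiv ℝ g y - fderiv ℝ g x‖ ≤ K * ‖z - x‖ := by
    intro y hy
    calc ‖fderiv ℝ g y - fderiv ℝ g x‖ ≤ K * ‖y - x‖ :=
          lipschitzOnWith_iff_norm_sub_le.mp hK (hball (hseg hy)).1
            (hball (hseg (left_mem_segment ℝ x z))).1
      _ ≤ K * ‖z - x‖ := by gcongr; exact norm_sub_le_of_mem_segment hy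
  have := (convex_segment x z).norm_image_sub_le_of_norm_fderiv_le'
    (fun y hy => (hball (hseg hy)).2) hbound (left_mem_segment ℝ x z) (right_mem_segment ℝ x z)
  rw [norm_pow, norm_norm]
  calc ‖g x - g z - fderiv ℝ g x (x - z)‖ = ‖g z - g x - fderiv ℝ g x (z - x)‖ := by
        rw [← norm_neg, show z - x = -(x - z) by abel, map_neg]; congr 1; abel
    _ ≤ K * ‖z - x‖ * ‖z - x‖ := this
    _ = K * ‖x - z‖ ^ 2 := by rw [norm_sub_rev z x]; ring

theorem DifferentiableAt.isBigO_norm_rpow_sub {g : E → F} {z : E} {α : ℝ}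
    (hg : DifferentiableAt ℝ g z) (hgz : g z = 0) (hα : 1 ≤ α) :
    (fun x => ‖g x‖ ^ α) =O[𝓝 z] fun x => x - z := by
  have hsmall : ∀ᶠ x in 𝓝 z, ‖g x‖ ≤ 1 := by
    have := hg.continuousAt.norm
    rw [ContinuousAt, hgz, norm_zero] at this
    exact this.eventually_le_const one_pos
  have hlin := hg.isBigO_sub
  simp only [hgz, sub_zero] at hlin
  refine (IsBigO.of_bound 1 ?_).trans hlin
  filter_upwards [hsmall] with x hx
  rw [one_mul, Real.norm_of_nonneg (by positivity)]
  calc ‖g x‖ ^ α ≤ ‖g x‖ ^ (1 : ℝ) :=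
        Real.rpow_le_rpow_of_exponent_ge' (norm_nonneg _) hx zero_le_one hα
    _ = ‖g x‖ := Real.rpow_one _

end Taylor

section NewtonStep

variable {E : Type*} [NormedAddCommGroup E] [InnerProductSpace ℝ E] {g : E → E} {z : E} {c : ℝ}
  {σ : E → ℝ}

theorem eventually_le_inner_fderiv_add_smul_id (hg : ContinuousAt (fderiv ℝ g) z) (hc : 0 < c)
    (hcoer : ∀ u, c * ‖u‖ ^ 2 ≤ ⟪fderiv ℝ g z u, u⟫) (hσ : Tendsto σ (𝓝 z) (𝓝 0)) :
    ∀ᶠ x in 𝓝 z, ∀ s, |s| ≤ σ x → ∀ u,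
      c / 2 * ‖u‖ ^ 2 ≤ ⟪(fderiv ℝ g x + s • ContinuousLinearMap.id ℝ E) u, u⟫ := by
  have hH : ∀ᶠ x in 𝓝 z, ‖fderiv ℝ g x - fderiv ℝ g z‖ < c / 4 := by
    simpa only [dist_eq_norm] using Metric.tendsto_nhds.mp hg (c / 4) (by positivity)
  filter_upwards [hH, hσ.eventually_lt_const (by positivity : (0 : ℝ) < c / 4)]
    with x hHx hσx s hs u
  have hS : ‖fderiv ℝ g x - fderiv ℝ g z + s • ContinuousLinearMap.id ℝ E‖ ≤ c / 2 := by
    calc _ ≤ ‖fderiv ℝ g x - fderiv ℝ g z‖ + |s| * 1 := by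
          refine (norm_add_le _ _).trans ?_
          rw [norm_smul, Real.norm_eq_abs]
          gcongr
          exact ContinuousLinearMap.norm_id_le
      _ ≤ c / 2 := by linarith
  convert le_inner_add_of_norm_le hcoer hS u using 3
  abel

theorem exists_eventually_norm_sub_sub_le_of_apply_eq (hg : ContDiffAt ℝ 2 g z) (hgz : g z = 0)
    (hc : 0 < c) (hcoer : ∀ᶠ x in 𝓝 z, ∀ s, |s| ≤ σ x → ∀ u,
      c * ‖u‖ ^ 2 ≤ ⟪(fderiv ℝ g x + s • ContinuousLinearMap.id ℝ E) u, u⟫)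
    (hσ : σ =O[𝓝 z] fun x => x - z) :
    ∃ C, ∀ᶠ x in 𝓝 z, ∀ s, |s| ≤ σ x → ∀ w,
      (fderiv ℝ g x + s • ContinuousLinearMap.id ℝ E) w = g x → ‖x - w - z‖ ≤ C * ‖x - z‖ ^ 2 := by
  obtain ⟨K, hK⟩ := hg.isBigO_sub_sub_fderiv_apply.bound
  obtain ⟨L, hL⟩ := hσ.bound
  refine ⟨(K + L) / c, ?_⟩
  filter_upwards [hcoer, hK, hL] with x hcx hKx hLx s hs w hw
  rw [hgz, sub_zero, norm_pow, norm_norm] at hKx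
  have hsL : |s| ≤ L * ‖x - z‖ := hs.trans ((le_abs_self _).trans hLx)
  have hstep := mul_norm_sub_le_of_le_inner (d := x - z) (hcx s hs) hw
  rw [sub_right_comm, div_mul_eq_mul_div, le_div_iff₀ hc]
  nlinarith [mul_le_mul_of_nonneg_right hsL (norm_nonneg (x - z))]

end NewtonStep

section Gradient

variable {E : Type*} [NormedAddCommGroup E] [InnerProductSpace ℝ E] [CompleteSpace E]
  {f : E → ℝ} {x : E}

theorem ContDiffAt.gradient {m n : WithTop ℕ∞} (hf : ContDiffAt ℝ n f x) (hmn : m + 1 ≤ n) :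
    ContDiffAt ℝ m (∇ f) x :=
  (InnerProductSpace.toDual ℝ E).symm.toContinuousLinearEquiv.contDiff.contDiffAt.comp x
    (hf.fderiv_right hmn)

theorem inner_fderiv_gradient_apply (u v : E) :
    ⟪fderiv ℝ (∇ f) x u, v⟫ = fderiv ℝ (fderiv ℝ f) x u v := by
  change ⟪fderiv ℝ ((InnerProductSpace.toDual ℝ E).symm ∘ fderiv ℝ f) x u, v⟫ = _
  rw [LinearIsometryEquiv.comp_fderiv]
  exact InnerProductSpace.toDual_symm_apply

theorem ContDiffAt.isSymmetric_fderiv_gradient (hf : ContDiffAt ℝ 2 f x) :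
    (fderiv ℝ (∇ f) x : E →ₗ[ℝ] E).IsSymmetric := fun u v => by
  rw [ContinuousLinearMap.coe_coe, inner_fderiv_gradient_apply, real_inner_comm,
    inner_fderiv_gradient_apply]
  exact hf.isSymmSndFDerivAt (by simp) u v

end Gradient

section QuadraticConvergence

variable {X : Type*} [PseudoMetricSpace X] {x : ℕ → X} {z : X} {C ε : ℝ}

theorem dist_le_geometric_of_dist_succ_le_mul_sq (hC : 0 ≤ C) (hCε : C * ε ≤ 1 / 2)
    (h0 : dist (x 0) z < ε)
    (hstep : ∀ n, dist (x n) z < ε → dist (x (n + 1)) z ≤ C * dist (x n) z ^ 2) (n : ℕ) :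
    dist (x n) z ≤ (1 / 2) ^ n * dist (x 0) z := by
  induction n with
  | zero => simp
  | succ n ih =>
    have hn : dist (x n) z < ε := ih.trans_lt <|
      (mul_le_of_le_one_left dist_nonneg (pow_le_one₀ (by norm_num) (by norm_num))).trans_lt h0
    calc dist (x (n + 1)) z ≤ C * dist (x n) z * dist (x n) z := by
          rw [mul_assoc, ← sq]; exact hstep n hn
      _ ≤ 1 / 2 * dist (x n) z := by
          gcongr
          exact (mul_le_mul_of_nonneg_left hn.le hC).trans hCε
      _ ≤ (1 / 2) ^ (n + 1) * dist (x 0) z := by rw [pow_succ']; linarith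

theorem exists_quadratic_convergence_of_eventually {R : X → X → Prop} {C₀ : ℝ}
    (h : ∀ᶠ y in 𝓝 z, ∀ y', R y y' → dist y' z ≤ C₀ * dist y z ^ 2) :
    ∃ ε > 0, ∃ C > 0, ∀ x : ℕ → X, dist (x 0) z < ε → (∀ n, R (x n) (x (n + 1))) →
      Tendsto x atTop (𝓝 z) ∧ ∀ n, dist (x (n + 1)) z ≤ C * dist (x n) z ^ 2 := by
  obtain ⟨r, hr, hball⟩ := Metric.eventually_nhds_iff_ball.mp h
  set C := max C₀ 1
  have hC : 0 < C := lt_max_of_lt_right one_pos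
  refine ⟨min r (1 / (2 * C)), by positivity, C, hC, fun x h0 hR => ?_⟩
  have hstep : ∀ n, dist (x n) z < min r (1 / (2 * C)) →
      dist (x (n + 1)) z ≤ C * dist (x n) z ^ 2 := fun n hn =>
    (hball (x n) (mem_ball.mpr (hn.trans_le (min_le_left _ _))) _ (hR n)).trans
      (by gcongr; exact le_max_left _ _)
  have hCε : C * min r (1 / (2 * C)) ≤ 1 / 2 :=
    (mul_le_mul_of_nonneg_left (min_le_right _ _) hC.le).trans_eq (by field_simp)
  have hgeo := dist_le_geometric_of_dist_succ_le_mul_sq hC.le hCε h0 hstep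
  refine ⟨tendsto_iff_dist_tendsto_zero.mpr (squeeze_zero (fun _ => dist_nonneg) hgeo ?_),
    fun n => hstep n ?_⟩
  · simpa using (tendsto_pow_atTop_nhds_zero_of_lt_one (by norm_num : (0 : ℝ) ≤ 1 / 2)
      (by norm_num)).mul_const (dist (x 0) z)
  · exact (hgeo n).trans_lt ((mul_le_of_le_one_left dist_nonneg
      (pow_le_one₀ (by norm_num) (by norm_num))).trans_lt h0)

end QuadraticConvergence

section NewQNewton

variable {E : Type*} [NormedAddCommGroup E] [InnerProductSpace ℝ E] [CompleteSpace E]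
  {ι : Type*} [LT ι]

def NewQNewtonStep (f : E → ℝ) (α : ℝ) (δs : ι → ℝ) (x x' : E) : Prop :=
  (∇ f x = 0 → x' = x) ∧
    (∇ f x ≠ 0 → ∃ (j : ι) (w : E),
      IsUnit (fderiv ℝ (∇ f) x + (δs j * ‖∇ f x‖ ^ α) • ContinuousLinearMap.id ℝ E) ∧
      (∀ i : ι, i < j →
        ¬ IsUnit (fderiv ℝ (∇ f) x + (δs i * ‖∇ f x‖ ^ α) • ContinuousLinearMap.id ℝ E)) ∧
      AbsInvApply (fderiv ℝ (∇ f) x + (δs j * ‖∇ f x‖ ^ α) • ContinuousLinearMap.id ℝ E)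
        (∇ f x) w ∧
      x' = x - w)

theorem newQNewtonSeq_iff {m : ℕ} {f : EuclideanSpace ℝ (Fin m) → ℝ} {α : ℝ}
    {δs : Fin (m + 1) → ℝ} {x : ℕ → EuclideanSpace ℝ (Fin m)} :
    NewQNewtonSeq f α δs x ↔ ∀ n, NewQNewtonStep f α δs (x n) (x (n + 1)) :=
  Iff.rfl

theorem exists_eventually_norm_sub_le_of_newQNewtonStep [FiniteDimensional ℝ E] [Fintype ι]
    {f : E → ℝ} {α : ℝ} {δs : ι → ℝ} {z : E} (hf : ContDiffAt ℝ 3 f z) (hα : 1 ≤ α)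
    (hz : ∇ f z = 0) (hpos : ∀ u, u ≠ 0 → 0 < ⟪fderiv ℝ (∇ f) z u, u⟫) :
    ∃ C, ∀ᶠ x in 𝓝 z, ∀ x', NewQNewtonStep f α δs x x' → ‖x' - z‖ ≤ C * ‖x - z‖ ^ 2 := by
  have hG : ContDiffAt ℝ 2 (∇ f) z := hf.gradient (by norm_num)
  obtain ⟨c, hc, hcoer⟩ := exists_pos_mul_sq_le_inner hpos
  set σ : E → ℝ := fun x => (∑ i, |δs i|) * ‖∇ f x‖ ^ α
  have hσ : σ =O[𝓝 z] fun x => x - z :=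
    ((hG.differentiableAt (by norm_num)).isBigO_norm_rpow_sub hz hα).const_mul_left _
  have hcoer' := eventually_le_inner_fderiv_add_smul_id
    (hG.fderiv_right (m := 1) le_rfl).continuousAt hc hcoer
    (hσ.trans_tendsto (tendsto_sub_nhds_zero_iff.mpr tendsto_id))
  obtain ⟨C, hC⟩ := exists_eventually_norm_sub_sub_le_of_apply_eq hG hz (half_pos hc) hcoer' hσ
  refine ⟨C, ?_⟩
  have hf2 : ∀ᶠ x in 𝓝 z, ContDiffAt ℝ 2 f x := (hf.of_le (by norm_num)).eventually (by simp)
  filter_upwards [hcoer', hC, hf2] with x hcx hCx hfx x' hstep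
  by_cases h0 : ∇ f x = 0
  · -- At a critical point the iteration stops, which is the step with `s = 0` and `w = 0`.
    simpa [hstep.1 h0] using hCx 0 (by simp only [abs_zero, σ]; positivity) 0 (by simp [h0])
  · obtain ⟨j, w, -, -, habs, rfl⟩ := hstep.2 h0
    have hs : |δs j * ‖∇ f x‖ ^ α| ≤ σ x := by
      rw [abs_mul, abs_of_nonneg (Real.rpow_nonneg (norm_nonneg _) α)]
      exact mul_le_mul_of_nonneg_right
        (Finset.single_le_sum (fun i _ => abs_nonneg (δs i)) (Finset.mem_univ j))
        (Real.rpow_nonneg (norm_nonneg _) α)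
    have hsymm : ((fderiv ℝ (∇ f) x + (δs j * ‖∇ f x‖ ^ α) • ContinuousLinearMap.id ℝ E :
        E →L[ℝ] E) : E →ₗ[ℝ] E).IsSymmetric := by
      rw [ContinuousLinearMap.toLinearMap_add, ContinuousLinearMap.toLinearMap_smul,
         ContinuousLinearMap.coe_id]
      exact hfx.isSymmetric_fderiv_gradient.add (LinearMap.IsSymmetric.id.smul rfl)
    have hAw := habs.apply_eq hsymm fun u hu =>
      (mul_pos (half_pos hc) (pow_pos (norm_pos_iff.mpr hu) 2)).trans_le (hcx _ hs u)
    simpa only [sub_right_comm] using hCx _ hs w hAw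

end NewQNewton

theorem newQNewton_local_quadratic_convergence_general
    {m : ℕ} (f : EuclideanSpace ℝ (Fin m) → ℝ) (hf : ContDiff ℝ 3 f)
    (α : ℝ) (hα : 1 < α)
    (δs : Fin (m + 1) → ℝ)
    (z : EuclideanSpace ℝ (Fin m)) (hz : ∇ f z = 0)
    (hposdef : ∀ u : EuclideanSpace ℝ (Fin m), u ≠ 0 →
      0 < ⟪fderiv ℝ (fun y => ∇ f y) z u, u⟫) :
    ∃ ε > 0, ∃ C > 0, ∀ x : ℕ → EuclideanSpace ℝ (Fin m),
      ‖x 0 - z‖ < ε → NewQNewtonSeq f α δs x →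
        Filter.Tendsto x Filter.atTop (nhds z) ∧
          ∀ n, ‖x (n + 1) - z‖ ≤ C * ‖x n - z‖ ^ 2 := by
  obtain ⟨C₀, hC₀⟩ :=
    exists_eventually_norm_sub_le_of_newQNewtonStep (δs := δs) hf.contDiffAt hα.le hz hposdef
  simp only [← dist_eq_norm] at hC₀
  simpa only [dist_eq_norm, newQNewtonSeq_iff] using exists_quadratic_convergence_of_eventually hC₀

/-- Let `f : ℝ^m → ℝ` be `C³`, `α > 1`, `δ_0, …, δ_m` pairwise distinct.
If `z` is a non-degenerate local minimum of `f` (`∇f(z) = 0` and `∇²f(z)` positive definite),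
then there are `ε > 0` and `C > 0` such that every New Q-Newton sequence starting at a point
`x₀` with `‖x₀ − z‖ < ε` converges to `z` with quadratic rate:
`‖x_{n+1} − z‖ ≤ C ‖x_n − z‖²`. -/
theorem newQNewton_local_quadratic_convergence
    {m : ℕ} (f : EuclideanSpace ℝ (Fin m) → ℝ) (hf : ContDiff ℝ 3 f)
    (α : ℝ) (hα : 1 < α)
    (δs : Fin (m + 1) → ℝ) (hδs : Function.Injective δs)
    (z : EuclideanSpace ℝ (Fin m)) (hz : ∇ f z = 0)
    (hposdef : ∀ u : EuclideanSpace ℝ (Fin m), u ≠ 0 →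
      0 < ⟪fderiv ℝ (fun y => ∇ f y) z u, u⟫) :
    ∃ ε > 0, ∃ C > 0, ∀ x : ℕ → EuclideanSpace ℝ (Fin m),
      ‖x 0 - z‖ < ε → NewQNewtonSeq f α δs x →
        Filter.Tendsto x Filter.atTop (nhds z) ∧
          ∀ n, ‖x (n + 1) - z‖ ≤ C * ‖x n - z‖ ^ 2 :=
  newQNewton_local_quadratic_convergence_general f hf α hα δs z hz hposdef
end
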